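/- arXiv:1602.05547 — 7 statements merged into one kernel-verified Lean document; each statement's English description precedes it below -/
import Mathlib

section
/- In any partial reachability tree of a one-dimensional BVASS, if u is a strict ancestor of v and counter(u) + |Q| ≤ counter(v), then there exist nodes u', v' with u ⪯ u' ≺ v' ⪯ v such that state(u') = state(v') and counter(u') < counter(v'). -/
/-- A one-dimensional branching vector addition system with states:
branching transitions `br`, unary transitions `un` with update in `{-1,0,1}`,
and final states `final`. -/
structure BVASS1 (Q : Type) where
  br : Q → Q → Q → Prop
  un : Q → ℤ → Q → Prop
  un_small : ∀ q z p, un q z p → z = -1 ∨ z = 0 ∨ z = 1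
  final : Q → Prop

/-- A finite binary tree with nodes given by a prefix-closed set of words over
`Bool` and labels in `Q × ℕ`. -/
structure BTree (Q : Type) where
  dom : Set (List Bool)
  label : List Bool → Q × ℕ
  finite : dom.Finite
  root_mem : ([] : List Bool) ∈ dom
  prefixClosed : ∀ ⦃u v : List Bool⦄, v ∈ dom → u <+: v → u ∈ dom

/-- `u` is a strict ancestor of `v`. -/
def StrictPrefix (u v : List Bool) : Prop := u <+: v ∧ u ≠ v

/-- `u` is the lowest common ancestor of `v` and `w`. -/
def IsLCA (u v w : List Bool) : Prop :=
  u <+: v ∧ u <+: w ∧ ∀ u', u' <+: v → u' <+: w → u' <+: u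

namespace BTree

variable {Q : Type}

def state (T : BTree Q) (u : List Bool) : Q := (T.label u).1

def counter (T : BTree Q) (u : List Bool) : ℕ := (T.label u).2

def IsLeaf (T : BTree Q) (u : List Bool) : Prop :=
  u ∈ T.dom ∧ ∀ b : Bool, u ++ [b] ∉ T.dom

/-- The subtree of `T` rooted at node `u`. -/
def subtree (T : BTree Q) (u : List Bool) (hu : u ∈ T.dom) : BTree Q where
  dom := {x | u ++ x ∈ T.dom}
  label := fun x => T.label (u ++ x)
  finite := Set.Finite.preimage
    (Function.Injective.injOn fun a b h => by simpa using h) T.finite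
  root_mem := by simpa using hu
  prefixClosed := by
    rintro a c hc ⟨t, rfl⟩
    exact T.prefixClosed hc ⟨t, by simp⟩

/-- All counter values in the tree are at most `j`. -/
def Bounded (T : BTree Q) (j : ℕ) : Prop := ∀ u ∈ T.dom, T.counter u ≤ j

/-- All counter values, except possibly the root's, are at most `j`. -/
def AlmostBounded (T : BTree Q) (j : ℕ) : Prop :=
  ∀ u ∈ T.dom, u ≠ [] → T.counter u ≤ j

/-- A node is increasing if it has a strict ancestor with the same state
and a strictly smaller counter value. -/
def Increasing (T : BTree Q) (v : List Bool) : Prop :=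
  ∃ u ∈ T.dom, StrictPrefix u v ∧ T.state u = T.state v ∧ T.counter u < T.counter v

/-- `u` is the anchor of the increasing node `v`: the maximal strict ancestor of `v`
with the same state and strictly smaller counter value. -/
def IsAnchorOf (T : BTree Q) (u v : List Bool) : Prop :=
  u ∈ T.dom ∧ StrictPrefix u v ∧ T.state u = T.state v ∧ T.counter u < T.counter v ∧
    ∀ u' ∈ T.dom, StrictPrefix u' v → T.state u' = T.state v →
      T.counter u' < T.counter v → u' <+: u

/-- The tree is exclusive: the least common ancestor of any two distinct increasing
leaves is a strict ancestor of at least one of their anchors. -/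
def Exclusive (T : BTree Q) : Prop :=
  ∀ v w, T.IsLeaf v → T.IsLeaf w → T.Increasing v → T.Increasing w → v ≠ w →
    ∀ a b l, T.IsAnchorOf a v → T.IsAnchorOf b w → IsLCA l v w →
      StrictPrefix l a ∨ StrictPrefix l b

end BTree

namespace BVASS1

variable {Q : Type}

/-- `T` is a partial reachability tree of `B`: at every inner node either a
branching transition splits the counter over two children, or a unary transition
changes the counter by `z` along a single-child edge. -/
def IsPRT (B : BVASS1 Q) (T : BTree Q) : Prop :=
  ∀ u ∈ T.dom, ¬ T.IsLeaf u →
    ((u ++ [false] ∈ T.dom ∧ u ++ [true] ∈ T.dom ∧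
        B.br (T.state u) (T.state (u ++ [false])) (T.state (u ++ [true])) ∧
        T.counter u = T.counter (u ++ [false]) + T.counter (u ++ [true])) ∨
     (u ++ [false] ∈ T.dom ∧ u ++ [true] ∉ T.dom ∧
        ∃ z : ℤ, B.un (T.state u) z (T.state (u ++ [false])) ∧
          (T.counter (u ++ [false]) : ℤ) = (T.counter u : ℤ) + z))

/-- `T` is a (full) reachability tree of `B`: a partial reachability tree all of
whose leaves are accepting (final state, counter zero). -/
def IsRT (B : BVASS1 Q) (T : BTree Q) : Prop :=
  B.IsPRT T ∧ ∀ u, T.IsLeaf u → B.final (T.state u) ∧ T.counter u = 0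

/-- The configuration `q(n)` is reachable. -/
def Reachable (B : BVASS1 Q) (q : Q) (n : ℕ) : Prop :=
  ∃ T : BTree Q, B.IsRT T ∧ T.label [] = (q, n)

/-- The reachability set of a control state. -/
def reachSet (B : BVASS1 Q) (q : Q) : Set ℕ := {n | B.Reachable q n}

/-- The configuration `q(n)` is coverable. -/
def Coverable (B : BVASS1 Q) (q : Q) (n : ℕ) : Prop :=
  ∃ m, n ≤ m ∧ B.Reachable q m

/-- `T` is expandable: exclusive, every leaf is accepting or increasing, and every
increasing leaf with its anchor induces a positive residue-reachability instance. -/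
def Expandable (B : BVASS1 Q) (T : BTree Q) : Prop :=
  T.Exclusive ∧
  (∀ v, T.IsLeaf v → (B.final (T.state v) ∧ T.counter v = 0) ∨ T.Increasing v) ∧
  (∀ v u, T.IsLeaf v → T.IsAnchorOf u v →
    ∃ l, B.Reachable (T.state v) l ∧ T.counter v ≤ l ∧
      l ≡ T.counter v [MOD T.counter v - T.counter u])

end BVASS1

/-- Pumping-node lemma: if the counter increases by at least `|Q|` between a node
and a strict descendant, the path between them contains an increasing node
together with a matching ancestor. -/
theorem stmt0 {Q : Type} [Fintype Q] (B : BVASS1 Q) (T : BTree Q)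
    (hT : B.IsPRT T) (u v : List Bool) (hu : u ∈ T.dom) (hv : v ∈ T.dom)
    (huv : StrictPrefix u v)
    (hc : T.counter u + Fintype.card Q ≤ T.counter v) :
    ∃ u' v', u' ∈ T.dom ∧ v' ∈ T.dom ∧ u <+: u' ∧ StrictPrefix u' v' ∧ v' <+: v ∧
      T.state u' = T.state v' ∧ T.counter u' < T.counter v' := by
  classical
  -- child counter exceeds parent by at most 1
  have hkey : ∀ w ∈ T.dom, ∀ b : Bool, w ++ [b] ∈ T.dom →
      T.counter (w ++ [b]) ≤ T.counter w + 1 := by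
    intro w hw b hb
    have hnl : ¬ T.IsLeaf w := fun hl => hl.2 b hb
    rcases hT w hw hnl with ⟨h0, h1, _, hsum⟩ | ⟨h0, h1, z, hz, heq⟩
    · cases b <;> omega
    · cases b
      · rcases B.un_small _ _ _ hz with rfl | rfl | rfl <;> omega
      · exact absurd hb h1
  obtain ⟨⟨t, rfl⟩, hne⟩ := huv
  set N := t.length with hN
  set c := T.counter u with hcdef
  have memb : ∀ k, u ++ t.take k ∈ T.dom := fun k =>
    T.prefixClosed hv ⟨t.drop k, by simp⟩
  set g : ℕ → ℕ := fun k => T.counter (u ++ t.take k) with hg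
  have hg0 : g 0 = c := by simp [hg, hcdef]
  have hgN : g N = T.counter (u ++ t) := by simp [hg, hN]
  have hstep : ∀ k < N, g (k + 1) ≤ g k + 1 := by
    intro k hk
    have htake : t.take (k + 1) = t.take k ++ [t.get ⟨k, hk⟩] := by
      rw [List.take_succ]
      simp [List.getElem?_eq_getElem hk]
    have := hkey (u ++ t.take k) (memb k) (t.get ⟨k, hk⟩)
      (by rw [List.append_assoc, ← htake]; exact memb (k + 1))
    show g (k + 1) ≤ g k + 1
    simp only [hg]
    rw [htake, ← List.append_assoc]
    exact this
  -- findGreatest machinery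
  set h : ℕ → ℕ := fun m => Nat.findGreatest (fun k => g k ≤ m) N with hdef
  have hhit : ∀ m, c ≤ m → m < g N → g (h m + 1) = m + 1 ∧ h m + 1 ≤ N := by
    intro m hm hm'
    have hP0 : g 0 ≤ m := by omega
    have hspec : g (h m) ≤ m :=
      Nat.findGreatest_spec (P := fun k => g k ≤ m) (Nat.zero_le N) hP0
    have hle : h m ≤ N := Nat.findGreatest_le N
    have hlt : h m < N := by
      rcases lt_or_eq_of_le hle with h' | h'
      · exact h'
      · exfalso; rw [h'] at hspec; omega
    have hgt : ¬ g (h m + 1) ≤ m :=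
      Nat.findGreatest_is_greatest (k := h m + 1) (Nat.lt_succ_self _) (by omega)
    have := hstep (h m) hlt
    exact ⟨by omega, by omega⟩
  -- mono of h
  have hmono : ∀ m m', m ≤ m' → h m ≤ h m' := by
    intro m m' hmm
    exact Nat.findGreatest_mono (fun k hk => le_trans hk hmm) le_rfl
  -- the sequence ψ
  set ψ : ℕ → ℕ := fun i => if i = 0 then 0 else h (c + i - 1) + 1 with hψ
  have hgNval : c + Fintype.card Q ≤ g N := by rw [hgN]; exact hc
  have hψval : ∀ i ≤ Fintype.card Q, g (ψ i) = c + i ∧ ψ i ≤ N := by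
    intro i hi
    rcases Nat.eq_zero_or_pos i with rfl | hpos
    · have hψ0 : ψ 0 = 0 := if_pos rfl
      rw [hψ0]
      exact ⟨by omega, Nat.zero_le N⟩
    · have h1 : c ≤ c + i - 1 := by omega
      have h2 : c + i - 1 < g N := by omega
      obtain ⟨he, hle⟩ := hhit (c + i - 1) h1 h2
      have hiψ : ψ i = h (c + i - 1) + 1 := if_neg hpos.ne'
      rw [hiψ]
      exact ⟨by omega, hle⟩
  have hψmono : ∀ i j, i ≤ j → j ≤ Fintype.card Q → ψ i ≤ ψ j := by
    intro i j hij hj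
    rcases Nat.eq_zero_or_pos i with rfl | hpos
    · have hψ0 : ψ 0 = 0 := if_pos rfl
      omega
    · have hjpos : 0 < j := by omega
      have e1 : ψ i = h (c + i - 1) + 1 := if_neg hpos.ne'
      have e2 : ψ j = h (c + j - 1) + 1 := if_neg hjpos.ne'
      have := hmono (c + i - 1) (c + j - 1) (by omega)
      omega
  -- pigeonhole
  have hcard : Fintype.card Q < Fintype.card (Fin (Fintype.card Q + 1)) := by simp
  obtain ⟨i, j, hij, heqst⟩ :=
    Fintype.exists_ne_map_eq_of_card_lt
      (fun i : Fin (Fintype.card Q + 1) => T.state (u ++ t.take (ψ i))) hcard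
  wlog hlt : (i : ℕ) < (j : ℕ) generalizing i j
  · exact this j i hij.symm heqst.symm
      (lt_of_le_of_ne (Nat.not_lt.mp hlt) fun hh => hij (Fin.ext hh.symm))
  have hi' : (i : ℕ) ≤ Fintype.card Q := by omega
  have hj' : (j : ℕ) ≤ Fintype.card Q := by omega
  obtain ⟨hgi, hψiN⟩ := hψval i hi'
  obtain ⟨hgj, hψjN⟩ := hψval j hj'
  refine ⟨u ++ t.take (ψ i), u ++ t.take (ψ j), memb _, memb _, ⟨t.take (ψ i), rfl⟩,
    ⟨?_, ?_⟩, ⟨t.drop (ψ j), by simp⟩, heqst, ?_⟩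
  · -- prefix
    have hle : ψ i ≤ ψ j := hψmono i j (le_of_lt hlt) hj'
    have hpre : t.take (ψ i) <+: t.take (ψ j) := by
      have : t.take (ψ i) = (t.take (ψ j)).take (ψ i) := by
        rw [List.take_take, min_eq_left hle]
      rw [this]; exact List.take_prefix _ _
    obtain ⟨s, hs⟩ := hpre
    exact ⟨s, by rw [List.append_assoc, hs]⟩
  · -- ne
    intro hε
    have : g (ψ i) = g (ψ j) := by simp only [hg]; rw [hε]
    omega
  · -- counters
    show g (ψ i) < g (ψ j)
    omega
end

section
/- Consider the family of one-dimensional BVASS B_n with states {q, q_f, q_0, …, q_n}, transitions (q,+1,q), (q,0,q_n), (q_i, q_{i-1}, q_{i-1}) for 0 < i ≤ n, (q_0, -1, q_f), and final state set {q_f}. Then for every i ∈ [0,n], the configuration q_i(N) is reachable if and only if N = 2^i. -/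
/-- States of the doubling gadget `B_n`. -/
inductive GState (n : ℕ) : Type
  | q : GState n
  | qf : GState n
  | qi : Fin (n + 1) → GState n

/-- The doubling gadget `B_n`: transitions `(q,+1,q)`, `(q,0,q_n)`,
`(q_i, q_{i-1}, q_{i-1})` for `0 < i ≤ n`, `(q_0,-1,q_f)`; final state `q_f`. -/
def Bn (n : ℕ) : BVASS1 (GState n) where
  br a b c := ∃ i : Fin (n + 1), 0 < (i : ℕ) ∧ a = .qi i ∧
      b = .qi ⟨(i : ℕ) - 1, lt_of_le_of_lt (Nat.sub_le _ _) i.isLt⟩ ∧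
      c = .qi ⟨(i : ℕ) - 1, lt_of_le_of_lt (Nat.sub_le _ _) i.isLt⟩
  un a z b :=
      (a = .q ∧ z = 1 ∧ b = .q) ∨
      (a = .q ∧ z = 0 ∧ b = .qi ⟨n, Nat.lt_succ_self n⟩) ∨
      (a = .qi ⟨0, Nat.succ_pos n⟩ ∧ z = -1 ∧ b = .qf)
  un_small := by rintro a z b (⟨_, rfl, _⟩ | ⟨_, rfl, _⟩ | ⟨_, rfl, _⟩) <;> norm_num
  final a := a = .qf

/-! In `B_n`, `q_f(N)` is reachable only for `N = 0` since `q_f` has no outgoing transitions,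
hence `q_0(N)` only for `N = 1`, and `q_{k+1}(N)` splits into two copies of `q_k`, so that
`N = 2^k + 2^k`. Reachability is analysed one step at a time: `q(N)` is reachable iff `q` is final
and `N = 0`, or some transition out of `q(N)` leads to reachable configurations. One direction
cuts a reachability tree at its root, the other grafts reachability trees under a new root. -/

namespace BTree

variable {Q : Type}

def graft (a : Q × ℕ) (S : Set Bool) (t : Bool → BTree Q) : BTree Q where
  dom := insert [] (⋃ b ∈ S, (b :: ·) '' (t b).dom)
  label
    | [] => a
    | b :: v => (t b).label v
  finite := (S.toFinite.biUnion fun b _ => (t b).finite.image _).insert []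
  root_mem := Set.mem_insert _ _
  prefixClosed := by
    rintro u _ (rfl | hw) huw
    · exact List.prefix_nil.mp huw ▸ Set.mem_insert _ _
    · obtain ⟨b, hb, v, hv, rfl⟩ : ∃ b ∈ S, ∃ v ∈ (t b).dom, b :: v = _ := by simpa using hw
      rcases List.prefix_cons_iff.mp huw with rfl | ⟨u, rfl, huv⟩
      · exact Set.mem_insert _ _
      · exact Set.mem_insert_of_mem _ (Set.mem_biUnion hb ⟨u, (t b).prefixClosed hv huv, rfl⟩)

variable {a : Q × ℕ} {S : Set Bool} {t : Bool → BTree Q} {b : Bool} {v : List Bool}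

@[simp]
lemma cons_mem_graft_dom : b :: v ∈ (graft a S t).dom ↔ b ∈ S ∧ v ∈ (t b).dom := by
  simp [graft, and_comm]

@[simp]
lemma state_graft_nil : (graft a S t).state [] = a.1 := rfl

@[simp]
lemma counter_graft_nil : (graft a S t).counter [] = a.2 := rfl

@[simp]
lemma state_graft_cons : (graft a S t).state (b :: v) = (t b).state v := rfl

@[simp]
lemma counter_graft_cons : (graft a S t).counter (b :: v) = (t b).counter v := rfl

lemma isLeaf_graft_cons (hb : b ∈ S) : (graft a S t).IsLeaf (b :: v) ↔ (t b).IsLeaf v := by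
  simp [IsLeaf, hb]

end BTree

namespace BVASS1

variable {Q : Type} {B : BVASS1 Q}

/-- The body of `IsPRT` at the node `u`. -/
def IsPRTAt (B : BVASS1 Q) (T : BTree Q) (u : List Bool) : Prop :=
  ¬ T.IsLeaf u →
    ((u ++ [false] ∈ T.dom ∧ u ++ [true] ∈ T.dom ∧
        B.br (T.state u) (T.state (u ++ [false])) (T.state (u ++ [true])) ∧
        T.counter u = T.counter (u ++ [false]) + T.counter (u ++ [true])) ∨
     (u ++ [false] ∈ T.dom ∧ u ++ [true] ∉ T.dom ∧
        ∃ z : ℤ, B.un (T.state u) z (T.state (u ++ [false])) ∧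
          (T.counter (u ++ [false]) : ℤ) = (T.counter u : ℤ) + z))

lemma IsRT.subtree {T : BTree Q} (hT : B.IsRT T) {u : List Bool} (hu : u ∈ T.dom) :
    B.IsRT (T.subtree u hu) := by
  have hleaf (x : List Bool) : (T.subtree u hu).IsLeaf x ↔ T.IsLeaf (u ++ x) := by
    simp [BTree.IsLeaf, BTree.subtree]
  refine ⟨fun x hx hx' => ?_, fun x hx => hT.2 (u ++ x) ((hleaf x).mp hx)⟩
  simpa [BTree.subtree, BTree.state, BTree.counter] using hT.1 (u ++ x) hx ((hleaf x).not.mp hx')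

lemma IsRT.reachable {T : BTree Q} (hT : B.IsRT T) {u : List Bool} (hu : u ∈ T.dom) :
    B.Reachable (T.state u) (T.counter u) :=
  ⟨T.subtree u hu, hT.subtree hu, by simp [BTree.subtree, BTree.state, BTree.counter]⟩

lemma isRT_graft {a : Q × ℕ} {S : Set Bool} {t : Bool → BTree Q}
    (ht : ∀ b ∈ S, B.IsRT (t b)) (hroot : B.IsPRTAt (BTree.graft a S t) [])
    (hS : S.Nonempty) : B.IsRT (BTree.graft a S t) := by
  refine ⟨fun u hu => ?_, fun u hu => ?_⟩
  · rcases u with _ | ⟨b, v⟩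
    · exact hroot
    · rw [BTree.cons_mem_graft_dom] at hu
      simpa [IsPRTAt, BTree.isLeaf_graft_cons hu.1, hu.1] using (ht b hu.1).1 v hu.2
  · rcases u with _ | ⟨b, v⟩
    · obtain ⟨b, hb⟩ := hS
      exact absurd hu fun h => h.2 b (by simpa [hb] using (t b).root_mem)
    · have hb : b ∈ S := (BTree.cons_mem_graft_dom.mp hu.1).1
      exact (ht b hb).2 v ((BTree.isLeaf_graft_cons hb).mp hu)

lemma Reachable.of_final {q : Q} (hq : B.final q) : B.Reachable q 0 := by
  refine ⟨⟨{[]}, fun _ => (q, 0), Set.finite_singleton _, rfl, fun u v hv huv => ?_⟩, ⟨?_, ?_⟩, rfl⟩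
  · exact List.prefix_nil.mp ((Set.mem_singleton_iff.mp hv) ▸ huv)
  · exact fun u hu hleaf => absurd ⟨hu, fun b h => by simp at h⟩ hleaf
  · exact fun u _ => ⟨hq, rfl⟩

lemma Reachable.branch {q p r : Q} {N₁ N₂ : ℕ} (hbr : B.br q p r) (hp : B.Reachable p N₁)
    (hr : B.Reachable r N₂) : B.Reachable q (N₁ + N₂) := by
  obtain ⟨T₁, hT₁, h₁⟩ := hp
  obtain ⟨T₂, hT₂, h₂⟩ := hr
  have hstate : T₁.state [] = p ∧ T₂.state [] = r := by simp [BTree.state, h₁, h₂]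
  have hcounter : T₁.counter [] = N₁ ∧ T₂.counter [] = N₂ := by simp [BTree.counter, h₁, h₂]
  refine ⟨BTree.graft (q, N₁ + N₂) Set.univ (fun b => bif b then T₂ else T₁),
    isRT_graft (by simp [hT₁, hT₂]) (fun _ => Or.inl ?_) Set.univ_nonempty, rfl⟩
  simp [hstate, hcounter, hbr, T₁.root_mem, T₂.root_mem]

lemma Reachable.unary {q p : Q} {z : ℤ} {N M : ℕ} (hun : B.un q z p) (hp : B.Reachable p M)
    (hM : (M : ℤ) = N + z) : B.Reachable q N := by
  obtain ⟨T, hT, h⟩ := hp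
  have hstate : T.state [] = p := by simp [BTree.state, h]
  have hcounter : T.counter [] = M := by simp [BTree.counter, h]
  refine ⟨BTree.graft (q, N) {false} (fun _ => T),
    isRT_graft (by simp [hT]) (fun _ => Or.inr ?_) (Set.singleton_nonempty _), rfl⟩
  simp [hstate, hcounter, hun, hM, T.root_mem]

theorem reachable_iff {q : Q} {N : ℕ} :
    B.Reachable q N ↔ (B.final q ∧ N = 0) ∨
      (∃ p r N₁ N₂, B.br q p r ∧ B.Reachable p N₁ ∧ B.Reachable r N₂ ∧ N = N₁ + N₂) ∨
      (∃ z p M, B.un q z p ∧ B.Reachable p M ∧ (M : ℤ) = N + z) := by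
  refine ⟨fun ⟨T, hT, hroot⟩ => ?_, ?_⟩
  · have hq : T.state [] = q := by simp [BTree.state, hroot]
    have hN : T.counter [] = N := by simp [BTree.counter, hroot]
    by_cases hleaf : T.IsLeaf []
    · exact Or.inl (hq ▸ hN ▸ hT.2 [] hleaf)
    rcases hT.1 [] T.root_mem hleaf with ⟨hl, hr, hbr, hsum⟩ | ⟨hl, -, z, hun, hz⟩
    · exact Or.inr (Or.inl ⟨_, _, _, _, hq ▸ hbr, hT.reachable hl, hT.reachable hr, hN ▸ hsum⟩)
    · exact Or.inr (Or.inr ⟨z, _, _, hq ▸ hun, hT.reachable hl, hN ▸ hz⟩)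
  · rintro (⟨hq, rfl⟩ | ⟨p, r, N₁, N₂, hbr, hp, hr, rfl⟩ | ⟨z, p, M, hun, hp, hM⟩)
    · exact .of_final hq
    · exact .branch hbr hp hr
    · exact .unary hun hp hM

end BVASS1

namespace Bn

variable {n : ℕ}

lemma reachable_qf_iff {N : ℕ} : (Bn n).Reachable .qf N ↔ N = 0 := by
  rw [BVASS1.reachable_iff]
  simp [Bn]

lemma reachable_qi_iff (k : ℕ) (hk : k < n + 1) (N : ℕ) :
    (Bn n).Reachable (.qi ⟨k, hk⟩) N ↔ N = 2 ^ k := by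
  induction k generalizing N with
  | zero =>
    have hqf : ∀ M, (Bn n).Reachable .qf M ↔ M = 0 := fun _ => reachable_qf_iff
    rw [BVASS1.reachable_iff]
    -- so that `simp` unfolds `Bn n` in the transitions only
    generalize (Bn n).Reachable = R at hqf ⊢
    simp [Bn, hqf]
    omega
  | succ k ih =>
    rw [BVASS1.reachable_iff]
    generalize (Bn n).Reachable = R at ih ⊢
    simp [Bn, ih, Fin.pos_iff_ne_zero, pow_succ, mul_two]

end Bn

/-- In `B_n`, the configuration `q_i(N)` is reachable iff `N = 2^i`. -/
theorem stmt2 (n : ℕ) (i : Fin (n + 1)) (N : ℕ) :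
    (Bn n).Reachable (.qi i) N ↔ N = 2 ^ (i : ℕ) :=
  Bn.reachable_qi_iff i i.isLt N
end

section
/- For the family B_n above, the reachability set of state q equals {0, 1, …, 2^n}, i.e., q(N) is reachable if and only if N ≤ 2^n. -/
namespace StmtAux
open BTree

variable {Q : Type}

/-! ### Tree constructors -/

def leafT (lab : Q × ℕ) : BTree Q where
  dom := {[]}
  label := fun _ => lab
  finite := Set.finite_singleton _
  root_mem := rfl
  prefixClosed := by
    rintro u v rfl huv
    simpa using List.prefix_nil.mp huv

@[simp] lemma leafT_dom (lab : Q × ℕ) : (leafT lab).dom = {[]} := rfl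
@[simp] lemma leafT_label (lab : Q × ℕ) (u) : (leafT lab).label u = lab := rfl

lemma isLeaf_leafT (lab : Q × ℕ) (u) (hu : u ∈ (leafT lab).dom) : (leafT lab).IsLeaf u := by
  rcases hu with rfl
  refine ⟨rfl, fun b hb => ?_⟩
  exact (List.cons_ne_nil b []) hb

def cons1 (lab : Q × ℕ) (T : BTree Q) : BTree Q where
  dom := {[]} ∪ (List.cons false) '' T.dom
  label := fun u => match u with
    | [] => lab
    | _ :: v => T.label v
  finite := (Set.finite_singleton _).union (T.finite.image _)
  root_mem := Or.inl rfl
  prefixClosed := by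
    rintro u v hv huv
    rcases hv with rfl | ⟨w, hw, rfl⟩
    · exact Or.inl (List.prefix_nil.mp huv)
    · rcases huv with ⟨t, ht⟩
      cases u with
      | nil => exact Or.inl rfl
      | cons b u' =>
        rw [List.cons_append] at ht
        obtain ⟨rfl, rfl⟩ := List.cons.inj ht
        exact Or.inr ⟨u', T.prefixClosed hw ⟨t, rfl⟩, rfl⟩

lemma mem_cons1 {lab : Q × ℕ} {T : BTree Q} {u} :
    u ∈ (cons1 lab T).dom ↔ u = [] ∨ ∃ v ∈ T.dom, u = false :: v := by
  constructor
  · rintro (rfl | ⟨w, hw, rfl⟩)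
    · exact Or.inl rfl
    · exact Or.inr ⟨w, hw, rfl⟩
  · rintro (rfl | ⟨v, hv, rfl⟩)
    · exact Or.inl rfl
    · exact Or.inr ⟨v, hv, rfl⟩

@[simp] lemma cons1_label_nil (lab : Q × ℕ) (T : BTree Q) : (cons1 lab T).label [] = lab := rfl
@[simp] lemma cons1_label_cons (lab : Q × ℕ) (T : BTree Q) (b v) :
    (cons1 lab T).label (b :: v) = T.label v := rfl

lemma true_notmem_cons1 (lab : Q × ℕ) (T : BTree Q) (v : List Bool) :
    true :: v ∉ (cons1 lab T).dom := by
  intro h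
  rcases mem_cons1.mp h with h | ⟨w, _, h⟩ <;> simp at h

lemma notLeaf_cons1_nil (lab : Q × ℕ) (T : BTree Q) : ¬ (cons1 lab T).IsLeaf [] := by
  rintro ⟨_, h⟩
  exact h false (Or.inr ⟨[], T.root_mem, rfl⟩)

lemma isLeaf_cons1 {lab : Q × ℕ} {T : BTree Q} {v} (hv : v ∈ T.dom) :
    (cons1 lab T).IsLeaf (false :: v) ↔ T.IsLeaf v := by
  constructor
  · rintro ⟨_, h⟩
    refine ⟨hv, fun b hb => h b ?_⟩
    exact Or.inr ⟨v ++ [b], hb, rfl⟩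
  · rintro ⟨_, h⟩
    refine ⟨Or.inr ⟨v, hv, rfl⟩, fun b hb => ?_⟩
    rcases mem_cons1.mp hb with h' | ⟨w, hw, h'⟩
    · simp at h'
    · rw [List.cons_append] at h'
      exact h b ((List.cons.inj h').2 ▸ hw)

lemma isRT_cons1 {B : BVASS1 Q} {lab : Q × ℕ} {T : BTree Q} (hT : B.IsRT T)
    (z : ℤ) (hz : B.un lab.1 z (T.state []))
    (hc : (T.counter [] : ℤ) = (lab.2 : ℤ) + z) : B.IsRT (cons1 lab T) := by
  constructor
  · intro u hu hleaf
    rcases mem_cons1.mp hu with rfl | ⟨v, hv, rfl⟩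
    · right
      refine ⟨Or.inr ⟨[], T.root_mem, rfl⟩, ?_, z, hz, hc⟩
      exact true_notmem_cons1 lab T []
    · have hnl : ¬ T.IsLeaf v := fun h => hleaf ((isLeaf_cons1 hv).mpr h)
      rcases hT.1 v hv hnl with ⟨h1, h2, h3, h4⟩ | ⟨h1, h2, z', h3, h4⟩
      · exact Or.inl ⟨Or.inr ⟨v ++ [false], h1, rfl⟩, Or.inr ⟨v ++ [true], h2, rfl⟩, h3, h4⟩
      · refine Or.inr ⟨Or.inr ⟨v ++ [false], h1, rfl⟩, ?_, z', h3, h4⟩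
        intro hmem
        rcases mem_cons1.mp hmem with h' | ⟨w, hw, h'⟩
        · simp at h'
        · rw [List.cons_append] at h'
          exact h2 ((List.cons.inj h').2 ▸ hw)
  · intro u hu
    rcases mem_cons1.mp hu.1 with rfl | ⟨v, hv, rfl⟩
    · exact absurd hu (notLeaf_cons1_nil lab T)
    · exact hT.2 v ((isLeaf_cons1 hv).mp hu)

def cons2 (lab : Q × ℕ) (T1 T2 : BTree Q) : BTree Q where
  dom := {[]} ∪ (List.cons false) '' T1.dom ∪ (List.cons true) '' T2.dom
  label := fun u => match u with
    | [] => lab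
    | false :: v => T1.label v
    | true :: v => T2.label v
  finite := (((Set.finite_singleton _).union (T1.finite.image _)).union (T2.finite.image _))
  root_mem := Or.inl (Or.inl rfl)
  prefixClosed := by
    rintro u v hv huv
    rcases huv with ⟨t, rfl⟩
    cases u with
    | nil => exact Or.inl (Or.inl rfl)
    | cons b u' =>
      rcases hv with (h | ⟨w, hw, h⟩) | ⟨w, hw, h⟩
      · simp at h
      · rw [List.cons_append] at h
        obtain ⟨rfl, h2⟩ := List.cons.inj h
        exact Or.inl (Or.inr ⟨u', T1.prefixClosed hw ⟨t, h2.symm⟩, rfl⟩)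
      · rw [List.cons_append] at h
        obtain ⟨rfl, h2⟩ := List.cons.inj h
        exact Or.inr ⟨u', T2.prefixClosed hw ⟨t, h2.symm⟩, rfl⟩

lemma mem_cons2 {lab : Q × ℕ} {T1 T2 : BTree Q} {u} :
    u ∈ (cons2 lab T1 T2).dom ↔
      u = [] ∨ (∃ v ∈ T1.dom, u = false :: v) ∨ (∃ v ∈ T2.dom, u = true :: v) := by
  constructor
  · rintro ((rfl | ⟨w, hw, rfl⟩) | ⟨w, hw, rfl⟩)
    · exact Or.inl rfl
    · exact Or.inr (Or.inl ⟨w, hw, rfl⟩)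
    · exact Or.inr (Or.inr ⟨w, hw, rfl⟩)
  · rintro (rfl | ⟨v, hv, rfl⟩ | ⟨v, hv, rfl⟩)
    · exact Or.inl (Or.inl rfl)
    · exact Or.inl (Or.inr ⟨v, hv, rfl⟩)
    · exact Or.inr ⟨v, hv, rfl⟩

@[simp] lemma cons2_label_nil (lab : Q × ℕ) (T1 T2 : BTree Q) :
    (cons2 lab T1 T2).label [] = lab := rfl
@[simp] lemma cons2_label_false (lab : Q × ℕ) (T1 T2 : BTree Q) (v) :
    (cons2 lab T1 T2).label (false :: v) = T1.label v := rfl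
@[simp] lemma cons2_label_true (lab : Q × ℕ) (T1 T2 : BTree Q) (v) :
    (cons2 lab T1 T2).label (true :: v) = T2.label v := rfl

lemma notLeaf_cons2_nil (lab : Q × ℕ) (T1 T2 : BTree Q) : ¬ (cons2 lab T1 T2).IsLeaf [] := by
  rintro ⟨_, h⟩
  exact h false (Or.inl (Or.inr ⟨[], T1.root_mem, rfl⟩))

lemma isLeaf_cons2_false {lab : Q × ℕ} {T1 T2 : BTree Q} {v} (hv : v ∈ T1.dom) :
    (cons2 lab T1 T2).IsLeaf (false :: v) ↔ T1.IsLeaf v := by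
  constructor
  · rintro ⟨_, h⟩
    exact ⟨hv, fun b hb => h b (Or.inl (Or.inr ⟨v ++ [b], hb, rfl⟩))⟩
  · rintro ⟨_, h⟩
    refine ⟨Or.inl (Or.inr ⟨v, hv, rfl⟩), fun b hb => ?_⟩
    rcases mem_cons2.mp hb with h' | ⟨w, hw, h'⟩ | ⟨w, hw, h'⟩
    · simp at h'
    · rw [List.cons_append] at h'
      exact h b ((List.cons.inj h').2 ▸ hw)
    · rw [List.cons_append] at h'
      simp at h'
lemma isLeaf_cons2_true {lab : Q × ℕ} {T1 T2 : BTree Q} {v} (hv : v ∈ T2.dom) :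
    (cons2 lab T1 T2).IsLeaf (true :: v) ↔ T2.IsLeaf v := by
  constructor
  · rintro ⟨_, h⟩
    exact ⟨hv, fun b hb => h b (Or.inr ⟨v ++ [b], hb, rfl⟩)⟩
  · rintro ⟨_, h⟩
    refine ⟨Or.inr ⟨v, hv, rfl⟩, fun b hb => ?_⟩
    rcases mem_cons2.mp hb with h' | ⟨w, hw, h'⟩ | ⟨w, hw, h'⟩
    · simp at h'
    · rw [List.cons_append] at h'
      simp at h'
    · rw [List.cons_append] at h'
      exact h b ((List.cons.inj h').2 ▸ hw)

lemma isRT_cons2 {B : BVASS1 Q} {lab : Q × ℕ} {T1 T2 : BTree Q}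
    (h1 : B.IsRT T1) (h2 : B.IsRT T2)
    (hbr : B.br lab.1 (T1.state []) (T2.state []))
    (hc : lab.2 = T1.counter [] + T2.counter []) : B.IsRT (cons2 lab T1 T2) := by
  constructor
  · intro u hu hleaf
    rcases mem_cons2.mp hu with rfl | ⟨v, hv, rfl⟩ | ⟨v, hv, rfl⟩
    · exact Or.inl ⟨Or.inl (Or.inr ⟨[], T1.root_mem, rfl⟩),
        Or.inr ⟨[], T2.root_mem, rfl⟩, hbr, hc⟩
    · have hnl : ¬ T1.IsLeaf v := fun h => hleaf ((isLeaf_cons2_false hv).mpr h)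
      rcases h1.1 v hv hnl with ⟨g1, g2, g3, g4⟩ | ⟨g1, g2, z', g3, g4⟩
      · exact Or.inl ⟨Or.inl (Or.inr ⟨v ++ [false], g1, rfl⟩),
          Or.inl (Or.inr ⟨v ++ [true], g2, rfl⟩), g3, g4⟩
      · refine Or.inr ⟨Or.inl (Or.inr ⟨v ++ [false], g1, rfl⟩), ?_, z', g3, g4⟩
        intro hmem
        rcases mem_cons2.mp hmem with h' | ⟨w, hw, h'⟩ | ⟨w, hw, h'⟩
        · simp at h'
        · rw [List.cons_append] at h'
          exact g2 ((List.cons.inj h').2 ▸ hw)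
        · rw [List.cons_append] at h'
          simp at h'
    · have hnl : ¬ T2.IsLeaf v := fun h => hleaf ((isLeaf_cons2_true hv).mpr h)
      rcases h2.1 v hv hnl with ⟨g1, g2, g3, g4⟩ | ⟨g1, g2, z', g3, g4⟩
      · exact Or.inl ⟨Or.inr ⟨v ++ [false], g1, rfl⟩,
          Or.inr ⟨v ++ [true], g2, rfl⟩, g3, g4⟩
      · refine Or.inr ⟨Or.inr ⟨v ++ [false], g1, rfl⟩, ?_, z', g3, g4⟩
        intro hmem
        rcases mem_cons2.mp hmem with h' | ⟨w, hw, h'⟩ | ⟨w, hw, h'⟩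
        · simp at h'
        · rw [List.cons_append] at h'
          simp at h'
        · rw [List.cons_append] at h'
          exact g2 ((List.cons.inj h').2 ▸ hw)
  · intro u hu
    rcases mem_cons2.mp hu.1 with rfl | ⟨v, hv, rfl⟩ | ⟨v, hv, rfl⟩
    · exact absurd hu (notLeaf_cons2_nil lab T1 T2)
    · exact h1.2 v ((isLeaf_cons2_false hv).mp hu)
    · exact h2.2 v ((isLeaf_cons2_true hv).mp hu)

end StmtAux
namespace StmtAux

/-! ### Subtree lemmas -/

@[simp] lemma subtree_label (T : BTree Q) (u) (hu : u ∈ T.dom) (x) :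
    (T.subtree u hu).label x = T.label (u ++ x) := rfl

lemma mem_subtree {T : BTree Q} {u} {hu : u ∈ T.dom} {x} :
    x ∈ (T.subtree u hu).dom ↔ u ++ x ∈ T.dom := Iff.rfl

lemma isLeaf_subtree {T : BTree Q} {u} {hu : u ∈ T.dom} {x} :
    (T.subtree u hu).IsLeaf x ↔ T.IsLeaf (u ++ x) := by
  unfold BTree.IsLeaf
  rw [mem_subtree]
  refine and_congr Iff.rfl (forall_congr' fun b => ?_)
  rw [not_iff_not, mem_subtree, List.append_assoc]

lemma isRT_subtree {B : BVASS1 Q} {T : BTree Q} (h : B.IsRT T) (u) (hu : u ∈ T.dom) :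
    B.IsRT (T.subtree u hu) := by
  constructor
  · intro x hx hl
    have hx' : u ++ x ∈ T.dom := hx
    have hl' : ¬ T.IsLeaf (u ++ x) := fun h' => hl (isLeaf_subtree.mpr h')
    have key := h.1 (u ++ x) hx' hl'
    simp only [List.append_assoc] at key
    exact key
  · intro x hx
    exact h.2 (u ++ x) (isLeaf_subtree.mp hx)

lemma ncard_subtree_lt (T : BTree Q) (b : Bool) (h : [b] ∈ T.dom) :
    (T.subtree [b] h).dom.ncard < T.dom.ncard := by
  have hinj : Function.Injective (List.cons b) := fun x y hxy => (List.cons.inj hxy).2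
  have him : (List.cons b) '' (T.subtree [b] h).dom ⊂ T.dom := by
    constructor
    · rintro _ ⟨x, hx, rfl⟩; exact hx
    · intro hsub
      rcases hsub T.root_mem with ⟨x, _, hx⟩
      simp at hx
  calc (T.subtree [b] h).dom.ncard = ((List.cons b) '' (T.subtree [b] h).dom).ncard :=
        (Set.ncard_image_of_injective _ hinj).symm
    _ < T.dom.ncard := Set.ncard_lt_ncard him T.finite

/-! ### Forward direction: constructing reachability trees -/

lemma isRT_leafT {B : BVASS1 Q} {q : Q} (hq : B.final q) : B.IsRT (leafT (q, 0)) := by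
  constructor
  · intro u hu hl
    exact absurd (isLeaf_leafT _ u hu) hl
  · intro u _
    exact ⟨hq, rfl⟩

lemma qiTree (n : ℕ) (k : ℕ) : ∀ hk : k < n + 1, ∃ T : BTree (GState n),
    (Bn n).IsRT T ∧ T.label [] = (.qi ⟨k, hk⟩, 2 ^ k) := by
  induction k with
  | zero =>
    intro hk
    refine ⟨cons1 (.qi ⟨0, hk⟩, 1) (leafT (.qf, 0)), ?_, rfl⟩
    refine isRT_cons1 (isRT_leafT rfl) (-1) (Or.inr (Or.inr ⟨rfl, rfl, rfl⟩)) ?_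
    norm_num [BTree.counter]
  | succ k ih =>
    intro hk
    obtain ⟨T, hT, hl⟩ := ih (by omega)
    refine ⟨cons2 (.qi ⟨k + 1, hk⟩, 2 ^ (k + 1)) T T, ?_, rfl⟩
    refine isRT_cons2 hT hT ⟨⟨k + 1, hk⟩, Nat.succ_pos k, rfl, ?_, ?_⟩ ?_
    · simp only [BTree.state, hl]; norm_num
    · simp only [BTree.state, hl]; norm_num
    · simp only [BTree.counter, hl]
      rw [pow_succ, mul_two]

lemma reach_pow (n : ℕ) : (Bn n).Reachable .q (2 ^ n) := by
  obtain ⟨T, hT, hl⟩ := qiTree n n (Nat.lt_succ_self n)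
  refine ⟨cons1 (.q, 2 ^ n) T, isRT_cons1 hT 0 (Or.inr (Or.inl ⟨rfl, rfl, ?_⟩)) ?_, rfl⟩
  · simp only [BTree.state, hl]
  · simp only [BTree.counter, hl]
    push_cast; ring

lemma reach_pred (n m : ℕ) (h : (Bn n).Reachable .q (m + 1)) : (Bn n).Reachable .q m := by
  obtain ⟨T, hT, hl⟩ := h
  refine ⟨cons1 (.q, m) T, isRT_cons1 hT 1 (Or.inl ⟨rfl, rfl, ?_⟩) ?_, rfl⟩
  · simp only [BTree.state, hl]
  · simp only [BTree.counter, hl]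
    push_cast; ring

lemma reach_down (n : ℕ) : ∀ d N, (Bn n).Reachable .q (N + d) → (Bn n).Reachable .q N := by
  intro d
  induction d with
  | zero => intro N h; exact h
  | succ d ih =>
    intro N h
    have : (Bn n).Reachable .q (N + 1 + d) := by rw [show N + 1 + d = N + (d + 1) by omega]; exact h
    exact reach_pred n N (ih (N + 1) this)

/-! ### Backward direction -/

def Good (n : ℕ) : GState n → ℕ → Prop
  | .q => fun c => c ≤ 2 ^ n
  | .qf => fun c => c = 0
  | .qi i => fun c => c = 2 ^ (i : ℕ)

lemma rt_good (n : ℕ) : ∀ k (T : BTree (GState n)), T.dom.ncard ≤ k →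
    (Bn n).IsRT T → Good n (T.state []) (T.counter []) := by
  intro k
  induction k with
  | zero =>
    intro T h _
    have : 0 < T.dom.ncard := (Set.ncard_pos T.finite).mpr ⟨[], T.root_mem⟩
    omega
  | succ k ih =>
    intro T hcard hT
    have child : ∀ b (hb : [b] ∈ T.dom), Good n (T.state [b]) (T.counter [b]) := by
      intro b hb
      have h1 := ih (T.subtree [b] hb)
        (by have := ncard_subtree_lt T b hb; omega) (isRT_subtree hT [b] hb)
      simpa [BTree.state, BTree.counter] using h1
    by_cases hleaf : T.IsLeaf []
    · obtain ⟨hf, hc⟩ := hT.2 [] hleaf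
      have hf' : T.state [] = .qf := hf
      rw [hf', hc]
      rfl
    · rcases hT.1 [] T.root_mem hleaf with ⟨h1, h2, h3, h4⟩ | ⟨h1, h2, z, h3, h4⟩
      · simp only [List.nil_append] at h1 h2 h3 h4
        obtain ⟨i, hi, ha, hb, hc⟩ := h3
        have g1 := child false h1
        have g2 := child true h2
        rw [hb] at g1
        rw [hc] at g2
        have g1' : T.counter [false] = 2 ^ ((i : ℕ) - 1) := g1
        have g2' : T.counter [true] = 2 ^ ((i : ℕ) - 1) := g2
        rw [ha]
        show T.counter [] = 2 ^ (i : ℕ)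
        rw [h4, g1', g2', ← two_mul, ← pow_succ', Nat.sub_add_cancel hi]
      · simp only [List.nil_append] at h1 h2 h3 h4
        rcases h3 with ⟨e1, e2, e3⟩ | ⟨e1, e2, e3⟩ | ⟨e1, e2, e3⟩
        · have g1 := child false h1
          rw [e3] at g1
          have g1' : T.counter [false] ≤ 2 ^ n := g1
          subst e2
          have h5 : T.counter [] ≤ T.counter [false] := by omega
          rw [e1]
          exact h5.trans g1'
        · have g1 := child false h1
          rw [e3] at g1
          have g1' : T.counter [false] = 2 ^ n := g1
          subst e2
          have h5 : T.counter [] = T.counter [false] := by omega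
          rw [e1]
          show T.counter [] ≤ 2 ^ n
          rw [h5, g1']
        · have g1 := child false h1
          rw [e3] at g1
          have g1' : T.counter [false] = 0 := g1
          subst e2
          have h5 : T.counter [] = 1 := by omega
          rw [e1]
          show T.counter [] = 2 ^ ((⟨0, Nat.succ_pos n⟩ : Fin (n + 1)) : ℕ)
          simpa using h5

end StmtAux

/-- In `B_n`, the reachability set of `q` equals `{0, …, 2^n}`. -/
theorem stmt3 (n : ℕ) (N : ℕ) :
    (Bn n).Reachable .q N ↔ N ≤ 2 ^ n := by
  constructor
  · rintro ⟨T, hT, hl⟩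
    have g := StmtAux.rt_good n T.dom.ncard T le_rfl hT
    have hs : T.state [] = .q := by rw [BTree.state, hl]
    have hc : T.counter [] = N := by rw [BTree.counter, hl]
    rw [hs, hc] at g
    exact g
  · intro h
    have key : (Bn n).Reachable .q (N + (2 ^ n - N)) := by
      rw [Nat.add_sub_cancel' h]; exact StmtAux.reach_pow n
    exact StmtAux.reach_down n (2 ^ n - N) N key
end

section
/- Suppose q(n) is reachable in a one-dimensional BVASS with state set Q and n > 2^{|Q|}. Then there exists a reachability tree T for some q(n') with n' ≥ n that contains a decreasing node v at depth at most |Q|. -/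
/-!
From a node with positive counter, some child carries at least half of it (a branching transition
splits the counter, a unary one changes it by at most one), so a root counter above `2 ^ |Q|`
yields a path of `|Q|` edges, two of whose nodes `u ≺ v` share a state by pigeonhole. If
`counter v < counter u`, then `v` is the decreasing node. Otherwise contract the tree: the subtree
at `v` replaces the one at `u`, and the counters on the path from the root to `u` are raised by
`counter v - counter u`. This is a smaller reachability tree whose root has the same state and a
larger counter, so we conclude by induction on the number of nodes.
-/

theorem List.exists_prefix_map_eq_of_card_le {α β : Type*} [Fintype β] (f : List α → β)
    {x : List α} (hx : Fintype.card β ≤ x.length) :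
    ∃ u v, u <+: v ∧ u ≠ v ∧ v <+: x ∧ f u = f v := by
  obtain ⟨i, j, hij, hf⟩ := Fintype.exists_ne_map_eq_of_card_lt
    (fun i : Fin (x.length + 1) => f (x.take i)) (by simpa using Nat.lt_succ_of_le hx)
  wlog hlt : i < j generalizing i j
  · exact this j i hij.symm hf.symm (lt_of_le_of_ne (not_lt.1 hlt) hij.symm)
  refine ⟨x.take i, x.take j, take_prefix_take_left hlt.le, fun he => ?_, take_prefix _ _, hf⟩
  have := congrArg length he
  simp only [length_take] at this
  omega

namespace BTree

variable {Q : Type}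

def redirect (u v x : List Bool) : List Bool :=
  if u <+: x then v ++ x.drop u.length else x

section redirect

variable {u v x : List Bool}

theorem redirect_append (s : List Bool) : redirect u v (u ++ s) = v ++ s := by
  simp [redirect]

theorem redirect_of_not_prefix (h : ¬ u <+: x) : redirect u v x = x := if_neg h

theorem redirect_injective (huv : u <+: v) : Function.Injective (redirect u v) := by
  have key : ∀ s x, ¬ u <+: x → v ++ s ≠ x := fun s x hx he =>
    hx (he ▸ huv.trans (List.prefix_append v s))
  intro a b hab
  by_cases ha : u <+: a <;> by_cases hb : u <+: b
  · obtain ⟨s, rfl⟩ := ha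
    obtain ⟨t, rfl⟩ := hb
    rw [redirect_append, redirect_append] at hab
    rw [List.append_cancel_left hab]
  · rw [redirect_of_not_prefix hb] at hab
    obtain ⟨s, rfl⟩ := ha
    exact absurd (redirect_append (v := v) s ▸ hab) (key s b hb)
  · rw [redirect_of_not_prefix ha] at hab
    obtain ⟨t, rfl⟩ := hb
    exact absurd (redirect_append (v := v) t ▸ hab).symm (key t a ha)
  · rwa [redirect_of_not_prefix ha, redirect_of_not_prefix hb] at hab

theorem redirect_ne (huv : StrictPrefix u v) : redirect u v x ≠ u := by
  by_cases h : u <+: x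
  · obtain ⟨s, rfl⟩ := h
    rw [redirect_append]
    intro he
    exact huv.2 (huv.1.eq_of_length_le (he ▸ (List.prefix_append v s).length_le))
  · rw [redirect_of_not_prefix h]
    rintro rfl
    exact h (List.prefix_refl _)

theorem redirect_prefix {a c : List Bool} (h : a <+: c) :
    redirect u v a <+: redirect u v c ∨ redirect u v a <+: u := by
  by_cases ha : u <+: a
  · obtain ⟨s, rfl⟩ := ha
    obtain ⟨t, rfl⟩ := h
    left
    rw [redirect_append, List.append_assoc, redirect_append, ← List.append_assoc]
    exact List.prefix_append _ _
  · rw [redirect_of_not_prefix ha]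
    by_cases hc : u <+: c
    · rcases List.prefix_or_prefix_of_prefix h hc with h' | h'
      · exact Or.inr h'
      · exact absurd h' ha
    · rw [redirect_of_not_prefix hc]
      exact Or.inl h

end redirect

def contract (T : BTree Q) (u v : List Bool) (huv : u <+: v) (hv : v ∈ T.dom) : BTree Q where
  dom := redirect u v ⁻¹' T.dom
  label x := if x <+: u ∧ x ≠ u then (T.state x, T.counter x + (T.counter v - T.counter u))
    else T.label (redirect u v x)
  finite := T.finite.preimage (redirect_injective huv).injOn
  root_mem := by
    by_cases h : u = []
    · subst h
      simpa [redirect] using hv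
    · simpa [redirect, List.prefix_nil, h] using T.root_mem
  prefixClosed := by
    intro a c hc hac
    rcases redirect_prefix hac with h | h
    · exact T.prefixClosed hc h
    · exact T.prefixClosed (T.prefixClosed hv huv) h

/-- Around `x`, the tree `T'` is a copy of `T` around `y`, except that the counters of `x` and of
its child in direction `b₀` are raised by `d`. -/
structure LocallyShifted (T' : BTree Q) (x : List Bool) (T : BTree Q) (y : List Bool) (d : ℕ)
    (b₀ : Bool) : Prop where
  mem_iff : ∀ b, x ++ [b] ∈ T'.dom ↔ y ++ [b] ∈ T.dom
  label_eq : T'.label x = (T.state y, T.counter y + d)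
  label_child : ∀ b, T'.label (x ++ [b]) =
    (T.state (y ++ [b]), T.counter (y ++ [b]) + if b = b₀ then d else 0)
  eq_zero_or_mem : d = 0 ∨ y ++ [b₀] ∈ T.dom

section contract

variable {T : BTree Q} {u v x : List Bool} {huv : u <+: v} {hv : v ∈ T.dom}

theorem mem_contract_append (s : List Bool) :
    u ++ s ∈ (T.contract u v huv hv).dom ↔ v ++ s ∈ T.dom := by
  simp [contract, redirect_append]

theorem mem_contract_of_not_prefix (h : ¬ u <+: x) :
    x ∈ (T.contract u v huv hv).dom ↔ x ∈ T.dom := by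
  simp [contract, redirect_of_not_prefix h]

theorem label_contract_append (s : List Bool) :
    (T.contract u v huv hv).label (u ++ s) = T.label (v ++ s) := by
  have : ¬ (u ++ s <+: u ∧ u ++ s ≠ u) := fun ⟨h, hne⟩ =>
    hne (h.eq_of_length_le (List.prefix_append u s).length_le)
  simp only [contract, if_neg this, redirect_append]

theorem label_contract_of_not_prefix (h₁ : ¬ u <+: x) (h₂ : ¬ x <+: u) :
    (T.contract u v huv hv).label x = T.label x := by
  simp only [contract, h₂, false_and, if_false, redirect_of_not_prefix h₁]

theorem label_contract_of_prefix (hst : T.state u = T.state v) (hc : T.counter u ≤ T.counter v)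
    (h : x <+: u) :
    (T.contract u v huv hv).label x = (T.state x, T.counter x + (T.counter v - T.counter u)) := by
  by_cases hx : x = u
  · subst hx
    have h := label_contract_append (T := T) (u := x) (huv := huv) (hv := hv) []
    rw [List.append_nil, List.append_nil] at h
    rw [h, hst, Nat.add_sub_cancel' hc]
    rfl
  · simp only [contract, h, hx, ne_eq, not_false_eq_true, and_self, if_true]

theorem ncard_contract_lt (huv : StrictPrefix u v) :
    (T.contract u v huv.1 hv).dom.ncard < T.dom.ncard := by
  have hu : u ∈ T.dom := T.prefixClosed hv huv.1
  calc (T.contract u v huv.1 hv).dom.ncard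
      = (redirect u v '' (redirect u v ⁻¹' T.dom)).ncard :=
        (Set.ncard_image_of_injective _ (redirect_injective huv.1)).symm
    _ < T.dom.ncard := by
        refine Set.ncard_lt_ncard ⟨Set.image_preimage_subset _ _, fun h => ?_⟩ T.finite
        obtain ⟨x, -, hx⟩ := h hu
        exact redirect_ne huv hx

theorem locallyShifted_contract (huv : u <+: v) (hv : v ∈ T.dom) (hst : T.state u = T.state v)
    (hc : T.counter u ≤ T.counter v) {x : List Bool} (hx : x ∈ (T.contract u v huv hv).dom) :
    ∃ y ∈ T.dom, ∃ d b₀, (T.contract u v huv hv).LocallyShifted x T y d b₀ := by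
  have hu : u ∈ T.dom := T.prefixClosed hv huv
  have hu' : u ∈ (T.contract u v huv hv).dom := by
    simpa using (mem_contract_append (huv := huv) (hv := hv) []).2 (by simpa using hv)
  by_cases hux : u <+: x
  · obtain ⟨s, rfl⟩ := hux
    refine ⟨v ++ s, (mem_contract_append s).1 hx, 0, false,
      ⟨fun b => ?_, ?_, fun b => ?_, Or.inl rfl⟩⟩
    · simpa only [List.append_assoc] using mem_contract_append (s ++ [b])
    · rw [label_contract_append]; rfl
    · simp only [List.append_assoc, label_contract_append, ite_self, Nat.add_zero]; rfl
  by_cases hxu : x <+: u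
  · -- `x` is a strict ancestor of `u`: its counter and that of its child towards `u` are shifted
    obtain ⟨r, rfl⟩ := hxu
    obtain ⟨b₀, r, rfl⟩ := List.exists_cons_of_ne_nil fun hr : r = [] => hux (by simp [hr])
    have h_off : ∀ b, b ≠ b₀ →
        ¬ x ++ b₀ :: r <+: x ++ [b] ∧ ¬ x ++ [b] <+: x ++ b₀ :: r := fun b hb => by
      simp [hb, Ne.symm hb]
    refine ⟨x, T.prefixClosed hu (List.prefix_append _ _),
      T.counter v - T.counter (x ++ b₀ :: r), b₀, ⟨fun b => ?_,
        label_contract_of_prefix hst hc (List.prefix_append _ _), fun b => ?_,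
        Or.inr (T.prefixClosed hu (by simp))⟩⟩
    all_goals rcases eq_or_ne b b₀ with rfl | hb
    · exact iff_of_true ((T.contract _ v huv hv).prefixClosed hu' (by simp))
        (T.prefixClosed hu (by simp))
    · exact mem_contract_of_not_prefix (h_off b hb).1
    · simpa using label_contract_of_prefix hst hc (x := x ++ [b]) (by simp)
    · rw [label_contract_of_not_prefix (h_off b hb).1 (h_off b hb).2, if_neg hb, Nat.add_zero]
      rfl
  · have h₁ : ∀ b, ¬ u <+: x ++ [b] := fun b h => by
      rcases List.prefix_concat_iff.1 h with rfl | h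
      · exact hxu (List.prefix_append _ _)
      · exact hux h
    have h₂ : ∀ b, ¬ x ++ [b] <+: u := fun b h => hxu ((List.prefix_append _ _).trans h)
    refine ⟨x, (mem_contract_of_not_prefix hux).1 hx, 0, false,
      ⟨fun b => mem_contract_of_not_prefix (h₁ b), ?_, fun b => ?_, Or.inl rfl⟩⟩
    · rw [label_contract_of_not_prefix hux hxu]; rfl
    · rw [label_contract_of_not_prefix (h₁ b) (h₂ b), ite_self, Nat.add_zero]; rfl

end contract

end BTree

namespace BVASS1

variable {Q : Type} {B : BVASS1 Q} {T T' : BTree Q}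

/-- The condition that `IsPRT` imposes on an inner node `u`. -/
def IsStep (B : BVASS1 Q) (T : BTree Q) (u : List Bool) : Prop :=
  (u ++ [false] ∈ T.dom ∧ u ++ [true] ∈ T.dom ∧
      B.br (T.state u) (T.state (u ++ [false])) (T.state (u ++ [true])) ∧
      T.counter u = T.counter (u ++ [false]) + T.counter (u ++ [true])) ∨
    (u ++ [false] ∈ T.dom ∧ u ++ [true] ∉ T.dom ∧
      ∃ z : ℤ, B.un (T.state u) z (T.state (u ++ [false])) ∧
        (T.counter (u ++ [false]) : ℤ) = (T.counter u : ℤ) + z)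

theorem IsStep.of_locallyShifted {x y : List Bool} {d : ℕ} {b₀ : Bool}
    (h : T'.LocallyShifted x T y d b₀) (hy : B.IsStep T y) : B.IsStep T' x := by
  have hs : ∀ b, T'.state (x ++ [b]) = T.state (y ++ [b]) := fun b => by
    simp only [BTree.state, h.label_child]
  have hc : ∀ b, T'.counter (x ++ [b]) = T.counter (y ++ [b]) + if b = b₀ then d else 0 :=
    fun b => by simp only [BTree.counter, h.label_child]
  have hsx : T'.state x = T.state y := by simp only [BTree.state, h.label_eq]
  have hcx : T'.counter x = T.counter y + d := by simp only [BTree.counter, h.label_eq]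
  rcases hy with ⟨h₀, h₁, hbr, hsum⟩ | ⟨h₀, h₁, z, hz, hz'⟩
  · refine Or.inl ⟨(h.mem_iff _).2 h₀, (h.mem_iff _).2 h₁, by rwa [hsx, hs, hs], ?_⟩
    rw [hcx, hc, hc, hsum]
    cases b₀ <;> simp only [↓reduceIte, Bool.true_eq_false, Bool.false_eq_true, add_zero] <;>
      omega
  · -- a unary step has no `true` child, so only its `false` child can carry the shift
    have hd : d = 0 ∨ b₀ = false :=
      h.eq_zero_or_mem.imp_right fun hm => Bool.eq_false_iff.2 fun ht => h₁ (ht ▸ hm)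
    refine Or.inr ⟨(h.mem_iff _).2 h₀, fun h' => h₁ ((h.mem_iff _).1 h'), z,
      by rwa [hsx, hs], ?_⟩
    rw [hc, hcx]
    rcases hd with rfl | rfl <;> simp only [ite_self, ↓reduceIte, add_zero, Nat.cast_add] <;>
      omega

theorem IsRT.of_locallyShifted (hT : B.IsRT T)
    (h : ∀ x ∈ T'.dom, ∃ y ∈ T.dom, ∃ d b₀, T'.LocallyShifted x T y d b₀) :
    B.IsRT T' := by
  refine ⟨fun x hx hleaf => ?_, fun x hleaf => ?_⟩
  · obtain ⟨y, hy, d, b₀, hxy⟩ := h x hx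
    refine IsStep.of_locallyShifted hxy (hT.1 y hy fun hyl => hleaf ⟨hx, fun b hb => ?_⟩)
    exact hyl.2 b ((hxy.mem_iff b).1 hb)
  · obtain ⟨y, hy, d, b₀, hxy⟩ := h x hleaf.1
    have hyl : T.IsLeaf y := ⟨hy, fun b hb => hleaf.2 b ((hxy.mem_iff b).2 hb)⟩
    have hd : d = 0 := hxy.eq_zero_or_mem.resolve_right (hyl.2 b₀)
    have hlabel : T'.label x = T.label y := by rw [hxy.label_eq, hd]; rfl
    simpa [BTree.state, BTree.counter, hlabel] using hT.2 y hyl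

theorem IsRT.contract {u v : List Bool} (hT : B.IsRT T) (huv : u <+: v) (hv : v ∈ T.dom)
    (hst : T.state u = T.state v) (hc : T.counter u ≤ T.counter v) :
    B.IsRT (T.contract u v huv hv) :=
  hT.of_locallyShifted fun _ hx => BTree.locallyShifted_contract huv hv hst hc hx

theorem IsRT.exists_child_counter_le {x : List Bool} (hT : B.IsRT T) (hx : x ∈ T.dom)
    (hpos : 0 < T.counter x) :
    ∃ b, x ++ [b] ∈ T.dom ∧ T.counter x + 1 ≤ 2 * (T.counter (x ++ [b]) + 1) := by
  have hleaf : ¬ T.IsLeaf x := fun h => by simp [(hT.2 x h).2] at hpos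
  rcases hT.1 x hx hleaf with ⟨h₀, h₁, -, hsum⟩ | ⟨h₀, -, z, hz, hz'⟩
  · rcases le_total (T.counter (x ++ [false])) (T.counter (x ++ [true])) with h | h
    · exact ⟨true, h₁, by omega⟩
    · exact ⟨false, h₀, by omega⟩
  · refine ⟨false, h₀, ?_⟩
    rcases B.un_small _ _ _ hz with rfl | rfl | rfl <;> omega

theorem IsRT.exists_mem_length_eq (hT : B.IsRT T) {k : ℕ} (hk : 2 ^ k ≤ T.counter []) :
    ∃ x ∈ T.dom, x.length = k := by
  suffices ∀ k, 2 ^ k ≤ T.counter [] →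
      ∃ x ∈ T.dom, x.length = k ∧ T.counter [] + 1 ≤ 2 ^ k * (T.counter x + 1) by
    obtain ⟨x, hx, hlen, -⟩ := this k hk
    exact ⟨x, hx, hlen⟩
  intro k
  induction k with
  | zero => exact fun _ => ⟨[], T.root_mem, rfl, by simp⟩
  | succ k ih =>
    intro hk
    have hpow : 2 ^ (k + 1) = 2 * 2 ^ k := by ring
    obtain ⟨x, hx, hlen, hbound⟩ := ih (by omega)
    have hpos : 0 < T.counter x := Nat.pos_of_ne_zero fun h => by
      rw [h] at hbound
      omega
    obtain ⟨b, hb, hhalf⟩ := hT.exists_child_counter_le hx hpos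
    refine ⟨x ++ [b], hb, by simp [hlen], ?_⟩
    calc T.counter [] + 1 ≤ 2 ^ k * (T.counter x + 1) := hbound
      _ ≤ 2 ^ k * (2 * (T.counter (x ++ [b]) + 1)) := Nat.mul_le_mul_left _ hhalf
      _ = 2 ^ (k + 1) * (T.counter (x ++ [b]) + 1) := by ring

end BVASS1

/-- If `q(n)` is reachable with `n > 2^|Q|`, then some reachability tree for `q(n')`
with `n' ≥ n` contains a decreasing node of depth at most `|Q|`. -/
theorem stmt5 {Q : Type} [Fintype Q] (B : BVASS1 Q) (q : Q) (n : ℕ)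
    (hreach : B.Reachable q n) (hn : 2 ^ Fintype.card Q < n) :
    ∃ n', n ≤ n' ∧ ∃ T : BTree Q, B.IsRT T ∧ T.label [] = (q, n') ∧
      ∃ v ∈ T.dom, v.length ≤ Fintype.card Q ∧
        ∃ u ∈ T.dom, StrictPrefix u v ∧ T.state u = T.state v ∧
          T.counter v < T.counter u := by
  obtain ⟨T, hT, hroot⟩ := hreach
  induction hN : T.dom.ncard using Nat.strong_induction_on generalizing T n with
  | _ N ih =>
    have hcounter : T.counter [] = n := by simp [BTree.counter, hroot]
    obtain ⟨x, hx, hlen⟩ := hT.exists_mem_length_eq (k := Fintype.card Q) (by omega)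
    obtain ⟨u, v, huv, hne, hvx, hst⟩ := List.exists_prefix_map_eq_of_card_le T.state hlen.ge
    have hv : v ∈ T.dom := T.prefixClosed hx hvx
    by_cases hdec : T.counter v < T.counter u
    · exact ⟨n, le_rfl, T, hT, hroot, v, hv, hlen ▸ hvx.length_le, u, T.prefixClosed hv huv,
        ⟨huv, hne⟩, hst, hdec⟩
    have hc : T.counter u ≤ T.counter v := not_lt.1 hdec
    have hroot' : (T.contract u v huv hv).label [] = (q, n + (T.counter v - T.counter u)) := by
      rw [BTree.label_contract_of_prefix hst hc List.nil_prefix, hcounter]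
      simp [BTree.state, hroot]
    obtain ⟨n', hn', hres⟩ := ih _ (hN ▸ BTree.ncard_contract_lt ⟨huv, hne⟩) _
      (by omega) _ (hT.contract huv hv hst hc) hroot' rfl
    exact ⟨n', by omega, hres⟩
end

section
/- In an expandable partial reachability tree, every node has at most one child whose subtree is not expandable. -/
section Helpers

variable {Q : Type}

lemma not_both_prefix (u v : List Bool) (hf : u ++ [false] <+: v) (ht : u ++ [true] <+: v) :
    False := by
  have h := List.prefix_of_prefix_length_le hf ht (by simp)
  have h2 := h.eq_of_length (by simp)
  simp at h2

lemma strictPrefix_append_right {a b : List Bool} (w : List Bool) :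
    StrictPrefix (w ++ a) (w ++ b) ↔ StrictPrefix a b := by
  unfold StrictPrefix
  constructor
  · rintro ⟨h1, h2⟩
    exact ⟨(List.prefix_append_right_inj w).1 h1, fun e => h2 (by rw [e])⟩
  · rintro ⟨h1, h2⟩
    exact ⟨(List.prefix_append_right_inj w).2 h1, fun e => h2 (List.append_cancel_left e)⟩

lemma isLCA_append {l v v' : List Bool} (w : List Bool) (h : IsLCA l v v') :
    IsLCA (w ++ l) (w ++ v) (w ++ v') := by
  obtain ⟨h1, h2, h3⟩ := h
  refine ⟨(List.prefix_append_right_inj w).2 h1, (List.prefix_append_right_inj w).2 h2, ?_⟩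
  intro u' ha hb
  rcases List.prefix_or_prefix_of_prefix ha (List.prefix_append w v) with hc | hc
  · exact hc.trans (List.prefix_append _ _)
  · obtain ⟨x, rfl⟩ := hc
    exact (List.prefix_append_right_inj w).2
      (h3 x ((List.prefix_append_right_inj w).1 ha) ((List.prefix_append_right_inj w).1 hb))

namespace BTree

lemma subtree_isLeaf (T : BTree Q) {w : List Bool} (hw : w ∈ T.dom) (x : List Bool) :
    (T.subtree w hw).IsLeaf x ↔ T.IsLeaf (w ++ x) := by
  simp [IsLeaf, subtree, Set.mem_setOf_eq, List.append_assoc]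

lemma subtree_increasing (T : BTree Q) {w : List Bool} (hw : w ∈ T.dom) {x : List Bool}
    (h : (T.subtree w hw).Increasing x) : T.Increasing (w ++ x) := by
  obtain ⟨c, hc, hsp, hst, hct⟩ := h
  exact ⟨w ++ c, hc, (strictPrefix_append_right w).2 hsp, hst, hct⟩

lemma subtree_isAnchorOf (T : BTree Q) {w : List Bool} (hw : w ∈ T.dom) {a x : List Bool}
    (h : (T.subtree w hw).IsAnchorOf a x) : T.IsAnchorOf (w ++ a) (w ++ x) := by
  obtain ⟨hdom, hsp, hst, hct, hmax⟩ := h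
  refine ⟨hdom, (strictPrefix_append_right w).2 hsp, hst, hct, ?_⟩
  intro u' hu' hsp' hst' hct'
  rcases List.prefix_or_prefix_of_prefix hsp'.1 (List.prefix_append w x) with hc | hc
  · exact hc.trans (List.prefix_append _ _)
  · obtain ⟨x', rfl⟩ := hc
    exact (List.prefix_append_right_inj w).2
      (hmax x' hu' ((strictPrefix_append_right w).1 hsp') hst' hct')

/-- Every increasing node has an anchor. -/
lemma exists_anchor (T : BTree Q) {v : List Bool} (h : T.Increasing v) :
    ∃ a, T.IsAnchorOf a v := by
  classical
  set P : List Bool → Prop := fun c => c ∈ T.dom ∧ StrictPrefix c v ∧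
    T.state c = T.state v ∧ T.counter c < T.counter v with hP
  obtain ⟨c₀, hc₀⟩ : ∃ c, P c := h
  set Pn : ℕ → Prop := fun n => ∃ c, P c ∧ c.length = n with hPn
  have hbound : ∀ c, P c → c.length ≤ v.length := fun c hc => hc.2.1.1.length_le
  have hspec : Pn (Nat.findGreatest Pn v.length) :=
    Nat.findGreatest_spec (hbound c₀ hc₀) ⟨c₀, hc₀, rfl⟩
  obtain ⟨a, hPa, hlen⟩ := hspec
  refine ⟨a, hPa.1, hPa.2.1, hPa.2.2.1, hPa.2.2.2, ?_⟩
  intro u' hu' hsp' hst' hct'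
  have hle : u'.length ≤ Nat.findGreatest Pn v.length :=
    Nat.le_findGreatest (hsp'.1.length_le) ⟨u', ⟨hu', hsp', hst', hct'⟩, rfl⟩
  exact List.prefix_of_prefix_length_le hsp'.1 hPa.2.1.1 (hlen ▸ hle)

end BTree

namespace BVASS1

/-- If every leaf of a subtree is accepting or increasing (within the subtree),
then the subtree of an expandable tree is expandable. -/
lemma expandable_subtree_of (B : BVASS1 Q) (T : BTree Q) (hexp : B.Expandable T)
    {w : List Bool} (hw : w ∈ T.dom)
    (hleaves : ∀ x, (T.subtree w hw).IsLeaf x →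
      (B.final ((T.subtree w hw).state x) ∧ (T.subtree w hw).counter x = 0) ∨
        (T.subtree w hw).Increasing x) :
    B.Expandable (T.subtree w hw) := by
  obtain ⟨hex, hlf, hres⟩ := hexp
  refine ⟨?_, hleaves, ?_⟩
  · intro v v' hv hv' hiv hiv' hne a b l hav hbv hl
    have hmain := hex (w ++ v) (w ++ v') ((T.subtree_isLeaf hw v).1 hv)
      ((T.subtree_isLeaf hw v').1 hv') (T.subtree_increasing hw hiv)
      (T.subtree_increasing hw hiv') (fun e => hne (List.append_cancel_left e))
      (w ++ a) (w ++ b) (w ++ l) (T.subtree_isAnchorOf hw hav)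
      (T.subtree_isAnchorOf hw hbv) (isLCA_append w hl)
    rcases hmain with hcase | hcase
    · exact Or.inl ((strictPrefix_append_right w).1 hcase)
    · exact Or.inr ((strictPrefix_append_right w).1 hcase)
  · intro v a hv hav
    exact hres (w ++ v) (w ++ a) ((T.subtree_isLeaf hw v).1 hv) (T.subtree_isAnchorOf hw hav)

end BVASS1

end Helpers

/-- In an expandable partial reachability tree, every node has at most one child
whose subtree is not expandable. -/
theorem stmt8 {Q : Type} (B : BVASS1 Q) (T : BTree Q)
    (hT : B.IsPRT T) (hexp : B.Expandable T) (u : List Bool)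
    (h0 : u ++ [false] ∈ T.dom) (h1 : u ++ [true] ∈ T.dom) :
    B.Expandable (T.subtree (u ++ [false]) h0) ∨
      B.Expandable (T.subtree (u ++ [true]) h1) := by
  by_contra hcon
  push_neg at hcon
  obtain ⟨hne0, hne1⟩ := hcon
  have key : ∀ (b : Bool) (hb : u ++ [b] ∈ T.dom),
      ¬ B.Expandable (T.subtree (u ++ [b]) hb) →
      ∃ a x, T.IsLeaf ((u ++ [b]) ++ x) ∧ T.IsAnchorOf a ((u ++ [b]) ++ x) ∧ a <+: u := by
    intro b hb hne
    have hfail : ¬ ∀ x, (T.subtree (u ++ [b]) hb).IsLeaf x →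
        (B.final ((T.subtree (u ++ [b]) hb).state x) ∧
          (T.subtree (u ++ [b]) hb).counter x = 0) ∨
          (T.subtree (u ++ [b]) hb).Increasing x :=
      fun h => hne (B.expandable_subtree_of T hexp hb h)
    push_neg at hfail
    obtain ⟨x, hx, hbad1, hbad2⟩ := hfail
    have hleafT := (T.subtree_isLeaf hb x).1 hx
    have hinc : T.Increasing ((u ++ [b]) ++ x) := by
      rcases hexp.2.1 _ hleafT with hacc | hinc
      · exact absurd hacc.2 (hbad1 hacc.1)
      · exact hinc
    obtain ⟨a, ha⟩ := T.exists_anchor hinc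
    refine ⟨a, x, hleafT, ha, ?_⟩
    have hnb : ¬ (u ++ [b] <+: a) := by
      rintro ⟨c, rfl⟩
      exact hbad2 ⟨c, ha.1, (strictPrefix_append_right (u ++ [b])).1 ha.2.1,
        ha.2.2.1, ha.2.2.2.1⟩
    rcases List.prefix_or_prefix_of_prefix ha.2.1.1 (List.prefix_append (u ++ [b]) x)
      with hc | hc
    · have h1 : a.length ≤ u.length + 1 := by simpa using hc.length_le
      have h2 : a.length ≠ u.length + 1 := by
        intro e
        exact hnb (by rw [hc.eq_of_length (by simp [e])])
      exact List.prefix_of_prefix_length_le hc (List.prefix_append u [b]) (by omega)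
    · exact absurd hc hnb
  obtain ⟨a₀, x₀, hl₀, ha₀, hpre₀⟩ := key false h0 hne0
  obtain ⟨a₁, x₁, hl₁, ha₁, hpre₁⟩ := key true h1 hne1
  have hpf : u ++ [false] <+: (u ++ [false]) ++ x₀ := List.prefix_append _ _
  have hpt : u ++ [true] <+: (u ++ [true]) ++ x₁ := List.prefix_append _ _
  have hinc₀ : T.Increasing ((u ++ [false]) ++ x₀) :=
    ⟨a₀, ha₀.1, ha₀.2.1, ha₀.2.2.1, ha₀.2.2.2.1⟩
  have hinc₁ : T.Increasing ((u ++ [true]) ++ x₁) :=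
    ⟨a₁, ha₁.1, ha₁.2.1, ha₁.2.2.1, ha₁.2.2.2.1⟩
  have hvne : (u ++ [false]) ++ x₀ ≠ (u ++ [true]) ++ x₁ := by
    intro e
    exact not_both_prefix u _ hpf (e ▸ hpt)
  have hlca : IsLCA u ((u ++ [false]) ++ x₀) ((u ++ [true]) ++ x₁) := by
    refine ⟨(List.prefix_append u [false]).trans hpf,
      (List.prefix_append u [true]).trans hpt, ?_⟩
    intro u' hu₀ hu₁
    rcases le_or_gt u'.length u.length with hl | hl
    · exact List.prefix_of_prefix_length_le hu₀ ((List.prefix_append u [false]).trans hpf) hl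
    · have hf : u ++ [false] <+: u' :=
        List.prefix_of_prefix_length_le hpf hu₀ (by simp; omega)
      have ht : u ++ [true] <+: u' :=
        List.prefix_of_prefix_length_le hpt hu₁ (by simp; omega)
      exact (not_both_prefix u u' hf ht).elim
  rcases hexp.1 _ _ hl₀ hl₁ hinc₀ hinc₁ hvne a₀ a₁ u ha₀ ha₁ hlca with h | h
  · exact h.2 (h.1.eq_of_length (Nat.le_antisymm h.1.length_le hpre₀.length_le))
  · exact h.2 (h.1.eq_of_length (Nat.le_antisymm h.1.length_le hpre₁.length_le))
end

section
/- With notation as in the residue fixed-point construction (R = ∪_i R_i, S the set of (n₀+N)-bounded-reachable configurations, N = |Q|·d), the set X = R ∪ (S ∩ Q×[n₀, n₀+N])/ℤ_d equals { (q, n mod d) : q ∈ Q, n ∈ reach(q), n ≥ n₀ }. -/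
namespace BVASS1

variable {Q : Type}

/-- `q(n)` has a `j`-bounded reachability tree. -/
def BoundedReachable (B : BVASS1 Q) (j : ℕ) (q : Q) (n : ℕ) : Prop :=
  ∃ T : BTree Q, B.IsRT T ∧ T.Bounded j ∧ T.label [] = (q, n)

/-- `q(n)` has an almost `j`-bounded reachability tree (all nodes except possibly
the root have counter at most `j`). -/
def AlmostBoundedReachable (B : BVASS1 Q) (j : ℕ) (q : Q) (n : ℕ) : Prop :=
  ∃ T : BTree Q, B.IsRT T ∧ T.AlmostBounded j ∧ T.label [] = (q, n)

/-- The set `S` of configurations having a `j`-bounded reachability tree. -/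
def Sset (B : BVASS1 Q) (j : ℕ) : Set (Q × ℕ) := {x | B.BoundedReachable j x.1 x.2}

/-- The residue `S/ℤ_d` of a set of configurations. -/
def resid (d : ℕ) (S : Set (Q × ℕ)) : Set (Q × ℕ) :=
  {x | ∃ n, (x.1, n) ∈ S ∧ x.2 = n % d}

/-- `Δ(V)`: application of a unary transition backwards, modulo `d`. -/
def deltaUn (B : BVASS1 Q) (d : ℕ) (V : Set (Q × ℕ)) : Set (Q × ℕ) :=
  {x | x.2 < d ∧ ∃ z p r, B.un x.1 z p ∧ (p, r) ∈ V ∧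
    (x.2 : ℤ) ≡ (r : ℤ) - z [ZMOD (d : ℤ)]}

/-- `Δ(V,W)`: application of a branching transition backwards, modulo `d`. -/
def deltaBr (B : BVASS1 Q) (d : ℕ) (V W : Set (Q × ℕ)) : Set (Q × ℕ) :=
  {x | x.2 < d ∧ ∃ p₀ p₁ r₀ r₁, B.br x.1 p₀ p₁ ∧ (p₀, r₀) ∈ V ∧ (p₁, r₁) ∈ W ∧
    x.2 ≡ r₀ + r₁ [MOD d]}

/-- The sequence `R_i` of the residue fixed-point construction, where `nN` stands
for `n₀ + N` with `N = |Q| · d`. -/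
def Rseq (B : BVASS1 Q) (nN d : ℕ) : ℕ → Set (Q × ℕ)
  | 0 => {x | x.2 < d ∧ ∃ n, x.2 = n % d ∧ nN ≤ n ∧ B.AlmostBoundedReachable nN x.1 n}
  | i + 1 =>
      Rseq B nN d i ∪ B.deltaUn d (Rseq B nN d i) ∪
      B.deltaBr d (Rseq B nN d i) (resid d (B.Sset nN)) ∪
      B.deltaBr d (resid d (B.Sset nN)) (Rseq B nN d i) ∪
      B.deltaBr d (Rseq B nN d i) (Rseq B nN d i)

end BVASS1

/-!
Soundness: a residue enters `R_{i+1}` through a backward transition whose premises are realised by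
reachability trees, and grafting these below a new root realises it. A unary update is at most
`+1`, so a backward step lowers the counter by at most one and the residues of `R_i` are realised
by counters `≥ n₀ + N - i`; as the `R_i` increase inside the `N`-element set `Q × ℤ_d`, they are
constant from `R_N` on, so `R` is realised above `n₀`.

Completeness, by induction on the size of a reachability tree with a counter above `n₀ + N`:
if only the root exceeds this bound the tree is almost bounded and its residue lies in `R₀`;
otherwise a child subtree exceeds it, so its residue lies in `R`, its sibling (if any) has its
residue in `R` or in `S/ℤ_d`, and the root's residue follows by one backward transition.
-/

theorem Monotone.apply_subset_apply_ncard {α : Type*} {f : ℕ → Set α} {s : Set α}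
    (hs : s.Finite) (hf : Monotone f) (hfs : ∀ n, f n ⊆ s)
    (hstab : ∀ m, f m = f (m + 1) → f (m + 1) = f (m + 2)) (n : ℕ) : f n ⊆ f s.ncard := by
  rcases le_total n s.ncard with hn | hn
  · exact hf hn
  have hfin (m : ℕ) : (f m).Finite := hs.subset (hfs m)
  have hcard : (f n).ncard = (f s.ncard).ncard :=
    Nat.stabilises_of_monotone (f := fun m => (f m).ncard)
      (fun a b hab => Set.ncard_le_ncard (hf hab) (hfin b)) (fun m => Set.ncard_le_ncard (hfs m) hs)
      (fun m h => congrArg Set.ncard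
        (hstab m (Set.eq_of_subset_of_ncard_le (hf m.le_succ) h.ge (hfin _)))) hn
  exact (Set.eq_of_subset_of_ncard_le (hf hn) hcard.le (hfin n)).ge

namespace BTree

variable {Q : Type}

theorem ext {T T' : BTree Q} (hdom : T.dom = T'.dom) (hlabel : T.label = T'.label) : T = T' := by
  cases T; cases T'; cases hdom; cases hlabel; rfl

section Subtree

variable (T : BTree Q) (u : List Bool) (hu : u ∈ T.dom) (x : List Bool)

@[simp] theorem mem_subtree_dom : x ∈ (T.subtree u hu).dom ↔ u ++ x ∈ T.dom := Iff.rfl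

@[simp] theorem subtree_state : (T.subtree u hu).state x = T.state (u ++ x) := rfl

@[simp] theorem subtree_counter : (T.subtree u hu).counter x = T.counter (u ++ x) := rfl

theorem isLeaf_subtree : (T.subtree u hu).IsLeaf x ↔ T.IsLeaf (u ++ x) := by
  simp only [IsLeaf, mem_subtree_dom, List.append_assoc]

theorem ncard_subtree_lt (hne : u ≠ []) : (T.subtree u hu).dom.ncard < T.dom.ncard := by
  have hinj : Function.Injective (u ++ ·) := fun a b h => List.append_cancel_left h
  have himg : (u ++ ·) '' (T.subtree u hu).dom ⊆ T.dom \ {[]} := by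
    rintro _ ⟨y, hy, rfl⟩
    exact ⟨hy, fun h => hne (List.append_eq_nil_iff.mp h).1⟩
  calc (T.subtree u hu).dom.ncard = ((u ++ ·) '' (T.subtree u hu).dom).ncard :=
        (Set.ncard_image_of_injective _ hinj).symm
    _ ≤ (T.dom \ {[]}).ncard := Set.ncard_le_ncard himg T.finite.sdiff
    _ < T.dom.ncard := Set.ncard_sdiff_singleton_lt_of_mem T.root_mem T.finite

end Subtree

/-- The tree with root label `a` whose child in direction `b` is the tree `c b`, if any. -/
def node (a : Q × ℕ) (c : Bool → Option (BTree Q)) : BTree Q where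
  dom := insert [] (⋃ b, (c b).elim ∅ fun T => List.cons b '' T.dom)
  label
    | [] => a
    | b :: x => (c b).elim a fun T => T.label x
  finite := by
    refine (Set.finite_iUnion fun b => ?_).insert []
    cases c b with
    | none => exact Set.finite_empty
    | some T => exact T.finite.image _
  root_mem := Set.mem_insert _ _
  prefixClosed := by
    rintro u v (rfl | hv) huv
    · rw [List.prefix_nil.mp huv]; exact Set.mem_insert _ _
    obtain ⟨b, hb⟩ := Set.mem_iUnion.mp hv
    cases hc : c b with
    | none => simp [hc] at hb
    | some T =>
      rw [hc] at hb
      obtain ⟨x, hx, rfl⟩ := hb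
      cases u with
      | nil => exact Set.mem_insert _ _
      | cons b' u =>
        obtain ⟨rfl, hux⟩ := List.cons_prefix_cons.mp huv
        exact Or.inr (Set.mem_iUnion.mpr ⟨b', by rw [hc]; exact ⟨u, T.prefixClosed hx hux, rfl⟩⟩)

section Node

variable {a : Q × ℕ} {c : Bool → Option (BTree Q)} {b : Bool} {T : BTree Q}

theorem mem_node_cons_iff {x : List Bool} :
    b :: x ∈ (node a c).dom ↔ ∃ T, c b = some T ∧ x ∈ T.dom := by
  simp only [node, Set.mem_insert_iff, reduceCtorEq, false_or, Set.mem_iUnion]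
  constructor
  · rintro ⟨b', hb'⟩
    cases hc : c b' <;> simp_all
  · rintro ⟨T, h, hx⟩
    exact ⟨b, by simpa [h]⟩

theorem mem_node_cons (h : c b = some T) (x : List Bool) :
    b :: x ∈ (node a c).dom ↔ x ∈ T.dom := by
  simp [mem_node_cons_iff, h]

theorem not_mem_node_cons (h : c b = none) (x : List Bool) : b :: x ∉ (node a c).dom := by
  simp [mem_node_cons_iff, h]

@[simp] theorem node_label_nil : (node a c).label [] = a := rfl

theorem node_label_cons (h : c b = some T) (x : List Bool) :
    (node a c).label (b :: x) = T.label x := by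
  simp [node, h]

theorem subtree_node (h : c b = some T) (hb : [b] ∈ (node a c).dom) :
    (node a c).subtree [b] hb = T :=
  ext (Set.ext (mem_node_cons (a := a) h)) (funext (node_label_cons h))

end Node

end BTree

namespace BVASS1

variable {Q : Type} {B : BVASS1 Q}

/-- The transition condition that `IsPRT` imposes at an inner node `u`. -/
def StepAt (B : BVASS1 Q) (T : BTree Q) (u : List Bool) : Prop :=
  (u ++ [false] ∈ T.dom ∧ u ++ [true] ∈ T.dom ∧
      B.br (T.state u) (T.state (u ++ [false])) (T.state (u ++ [true])) ∧
      T.counter u = T.counter (u ++ [false]) + T.counter (u ++ [true])) ∨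
    (u ++ [false] ∈ T.dom ∧ u ++ [true] ∉ T.dom ∧
      ∃ z : ℤ, B.un (T.state u) z (T.state (u ++ [false])) ∧
        (T.counter (u ++ [false]) : ℤ) = (T.counter u : ℤ) + z)

theorem stepAt_subtree (T : BTree Q) (u : List Bool) (hu : u ∈ T.dom) (x : List Bool) :
    B.StepAt (T.subtree u hu) x ↔ B.StepAt T (u ++ x) := by
  simp only [StepAt, BTree.mem_subtree_dom, BTree.subtree_state, BTree.subtree_counter,
    List.append_assoc]

theorem isRT_subtree {T : BTree Q} (hT : B.IsRT T) (u : List Bool) (hu : u ∈ T.dom) :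
    B.IsRT (T.subtree u hu) :=
  ⟨fun x hx hleaf => (stepAt_subtree T u hu x).2
      (hT.1 _ hx fun h => hleaf ((BTree.isLeaf_subtree T u hu x).2 h)),
    fun x hx => hT.2 _ ((BTree.isLeaf_subtree T u hu x).1 hx)⟩

theorem isRT_of_stepAt_nil {T : BTree Q} (hroot : B.StepAt T [])
    (hchild : ∀ b (hb : [b] ∈ T.dom), B.IsRT (T.subtree [b] hb)) : B.IsRT T := by
  refine ⟨fun u hu hleaf => ?_, fun u hu => ?_⟩
  · cases u with
    | nil => exact hroot
    | cons b x =>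
      have hb : [b] ∈ T.dom := T.prefixClosed hu ⟨x, rfl⟩
      exact (stepAt_subtree T [b] hb x).1 ((hchild b hb).1 x hu fun h =>
        hleaf ((BTree.isLeaf_subtree T [b] hb x).1 h))
  · cases u with
    | nil => rcases hroot with ⟨h0, -⟩ | ⟨h0, -⟩ <;> exact absurd h0 (hu.2 false)
    | cons b x =>
      have hb : [b] ∈ T.dom := T.prefixClosed hu.1 ⟨x, rfl⟩
      exact (hchild b hb).2 x ((BTree.isLeaf_subtree T [b] hb x).2 hu)

theorem Reachable.of_un {q p : Q} {z : ℤ} {n m : ℕ} (hun : B.un q z p) (hp : B.Reachable p n)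
    (hm : (n : ℤ) = m + z) : B.Reachable q m := by
  obtain ⟨T, hT, hlab⟩ := hp
  set c : Bool → Option (BTree Q) := fun b => if b then none else some T
  have hc : c false = some T := rfl
  refine ⟨BTree.node (q, m) c,
    isRT_of_stepAt_nil (Or.inr ⟨(BTree.mem_node_cons hc []).2 T.root_mem,
      BTree.not_mem_node_cons rfl [], z, ?_, ?_⟩) fun b hb => ?_, rfl⟩
  · simpa [BTree.state, BTree.node_label_cons hc, hlab] using hun
  · simpa [BTree.counter, BTree.node_label_cons hc, hlab] using hm
  · cases b with
    | false => rwa [BTree.subtree_node hc]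
    | true => exact absurd hb (BTree.not_mem_node_cons rfl [])

theorem Reachable.of_br {q p₀ p₁ : Q} {n₀ n₁ : ℕ} (hbr : B.br q p₀ p₁)
    (h₀ : B.Reachable p₀ n₀) (h₁ : B.Reachable p₁ n₁) : B.Reachable q (n₀ + n₁) := by
  obtain ⟨T₀, hT₀, hlab₀⟩ := h₀
  obtain ⟨T₁, hT₁, hlab₁⟩ := h₁
  set c : Bool → Option (BTree Q) := fun b => some (if b then T₁ else T₀)
  have hc₀ : c false = some T₀ := rfl
  have hc₁ : c true = some T₁ := rfl
  refine ⟨BTree.node (q, n₀ + n₁) c,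
    isRT_of_stepAt_nil (Or.inl ⟨(BTree.mem_node_cons hc₀ []).2 T₀.root_mem,
      (BTree.mem_node_cons hc₁ []).2 T₁.root_mem, ?_, ?_⟩) fun b hb => ?_, rfl⟩
  · simpa [BTree.state, BTree.node_label_cons hc₀, BTree.node_label_cons hc₁, hlab₀, hlab₁]
      using hbr
  · simp [BTree.counter, BTree.node_label_cons hc₀, BTree.node_label_cons hc₁, hlab₀, hlab₁]
  · cases b with
    | false => rwa [BTree.subtree_node hc₀]
    | true => rwa [BTree.subtree_node hc₁]

variable {d : ℕ}

def reachResidues (B : BVASS1 Q) (d m : ℕ) : Set (Q × ℕ) :=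
  {x | x.2 < d ∧ ∃ n, B.Reachable x.1 n ∧ m ≤ n ∧ x.2 = n % d}

theorem reachResidues_anti : Antitone (B.reachResidues d) :=
  fun _ _ hm _ ⟨hx, n, hn, hmn, hmod⟩ => ⟨hx, n, hn, hm.trans hmn, hmod⟩

theorem resid_subset_reachResidues (hd : 0 < d) {S : Set (Q × ℕ)} {m : ℕ}
    (hS : ∀ x ∈ S, B.Reachable x.1 x.2 ∧ m ≤ x.2) : resid d S ⊆ B.reachResidues d m := by
  rintro ⟨q, s⟩ ⟨n, hn, rfl⟩
  exact ⟨Nat.mod_lt _ hd, n, (hS _ hn).1, (hS _ hn).2, rfl⟩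

theorem deltaUn_subset_reachResidues {V : Set (Q × ℕ)} {m : ℕ}
    (hV : V ⊆ B.reachResidues d (m + 1)) : B.deltaUn d V ⊆ B.reachResidues d m := by
  rintro ⟨q, s⟩ ⟨hs, z, p, r, hun, hpr, hmod⟩
  obtain ⟨-, n, hn, hmn, rfl⟩ := hV hpr
  have hz := B.un_small _ _ _ hun
  obtain ⟨k, hk⟩ : ∃ k : ℕ, (n : ℤ) = k + z := ⟨(n - z).toNat, by omega⟩
  refine ⟨hs, k, hn.of_un hun hk, by omega, ?_⟩
  have hsk : (s : ℤ) ≡ k [ZMOD d] :=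
    calc (s : ℤ) ≡ ((n % d : ℕ) : ℤ) - z [ZMOD d] := hmod
      _ ≡ n - z [ZMOD d] := (Int.natCast_modEq_iff.mpr (Nat.mod_modEq n d)).sub_right z
      _ = k := by omega
  rw [← Nat.mod_eq_of_lt hs]
  exact Int.natCast_modEq_iff.mp hsk

theorem deltaBr_subset_reachResidues {V W : Set (Q × ℕ)} {a b : ℕ}
    (hV : V ⊆ B.reachResidues d a) (hW : W ⊆ B.reachResidues d b) :
    B.deltaBr d V W ⊆ B.reachResidues d (a + b) := by
  rintro ⟨q, s⟩ ⟨hs, p₀, p₁, r₀, r₁, hbr, h₀, h₁, hmod⟩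
  obtain ⟨-, n₀, hn₀, ha, rfl⟩ := hV h₀
  obtain ⟨-, n₁, hn₁, hb, rfl⟩ := hW h₁
  refine ⟨hs, n₀ + n₁, hn₀.of_br hbr hn₁, by omega, ?_⟩
  rw [Nat.add_mod, ← hmod, Nat.mod_eq_of_lt hs]

variable {nN : ℕ}

theorem rseq_subset_reachResidues (hd : 0 < d) :
    ∀ i ≤ nN, B.Rseq nN d i ⊆ B.reachResidues d (nN - i)
  | 0, _ => by
    rintro x ⟨hx, n, hmod, hn, T, hT, -, hlab⟩
    exact ⟨hx, n, ⟨T, hT, hlab⟩, hn, hmod⟩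
  | i + 1, hi => by
    have ih := rseq_subset_reachResidues hd i (by omega)
    rw [show nN - i = nN - (i + 1) + 1 by omega] at ih
    have hS : resid d (B.Sset nN) ⊆ B.reachResidues d 0 :=
      resid_subset_reachResidues hd fun _ ⟨T, hT, _, hlab⟩ => ⟨⟨T, hT, hlab⟩, Nat.zero_le _⟩
    refine Set.union_subset (Set.union_subset (Set.union_subset (Set.union_subset ?_ ?_) ?_) ?_) ?_
    · exact ih.trans (reachResidues_anti (Nat.le_succ _))
    · exact deltaUn_subset_reachResidues ih
    · exact (deltaBr_subset_reachResidues ih hS).trans (reachResidues_anti (by omega))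
    · exact (deltaBr_subset_reachResidues hS ih).trans (reachResidues_anti (by omega))
    · exact (deltaBr_subset_reachResidues ih ih).trans (reachResidues_anti (by omega))

theorem rseq_mono : Monotone (B.Rseq nN d) :=
  monotone_nat_of_le_succ fun _ _ hx => Or.inl (Or.inl (Or.inl (Or.inl hx)))

theorem rseq_subset_snd_lt : ∀ i, B.Rseq nN d i ⊆ {x | x.2 < d}
  | 0 => fun _ hx => hx.1
  | i + 1 => by
    rintro x ((((hx | hx) | hx) | hx) | hx)
    · exact rseq_subset_snd_lt i hx
    all_goals exact hx.1

/-- `R_i` lives in the `|Q| · d`-element set `Q × ℤ_d` and `R_{i+1}` is determined by `R_i`. -/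
theorem rseq_subset_rseq_card [Fintype Q] (i : ℕ) :
    B.Rseq nN d i ⊆ B.Rseq nN d (Fintype.card Q * d) := by
  have hs : {x : Q × ℕ | x.2 < d} = ↑(Finset.univ ×ˢ Finset.range d : Finset (Q × ℕ)) := by
    ext; simp
  have hcard : {x : Q × ℕ | x.2 < d}.ncard = Fintype.card Q * d := by
    rw [hs, Set.ncard_coe_finset, Finset.card_product, Finset.card_univ, Finset.card_range]
  rw [← hcard]
  refine rseq_mono.apply_subset_apply_ncard (hs ▸ Finset.finite_toSet _) rseq_subset_snd_lt
    (fun m h => ?_) i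
  exact congrArg (fun V => V ∪ B.deltaUn d V ∪ B.deltaBr d V (resid d (B.Sset nN)) ∪
    B.deltaBr d (resid d (B.Sset nN)) V ∪ B.deltaBr d V V) h

theorem deltaUn_iUnion_rseq_subset :
    B.deltaUn d (⋃ i, B.Rseq nN d i) ⊆ ⋃ i, B.Rseq nN d i := by
  rintro x ⟨hx, z, p, r, hun, hpr, hmod⟩
  obtain ⟨i, hi⟩ := Set.mem_iUnion.mp hpr
  exact Set.mem_iUnion.mpr
    ⟨i + 1, Or.inl (Or.inl (Or.inl (Or.inr ⟨hx, z, p, r, hun, hi, hmod⟩)))⟩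

theorem mem_iUnion_rseq_of_br (hd : 0 < d) {q p₀ p₁ : Q} {r₀ r₁ : ℕ} (hbr : B.br q p₀ p₁)
    (h₀ : (p₀, r₀) ∈ (⋃ i, B.Rseq nN d i) ∪ resid d (B.Sset nN))
    (h₁ : (p₁, r₁) ∈ (⋃ i, B.Rseq nN d i) ∪ resid d (B.Sset nN))
    (hR : (p₀, r₀) ∈ ⋃ i, B.Rseq nN d i ∨ (p₁, r₁) ∈ ⋃ i, B.Rseq nN d i) :
    (q, (r₀ + r₁) % d) ∈ ⋃ i, B.Rseq nN d i := by
  have hlt : (r₀ + r₁) % d < d := Nat.mod_lt _ hd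
  have hmod : (r₀ + r₁) % d ≡ r₀ + r₁ [MOD d] := Nat.mod_modEq _ _
  have both {i j} (h₀ : (p₀, r₀) ∈ B.Rseq nN d i) (h₁ : (p₁, r₁) ∈ B.Rseq nN d j) :
      (q, (r₀ + r₁) % d) ∈ ⋃ i, B.Rseq nN d i :=
    Set.mem_iUnion.mpr ⟨max i j + 1, Or.inr ⟨hlt, p₀, p₁, r₀, r₁, hbr,
      rseq_mono (le_max_left i j) h₀, rseq_mono (le_max_right i j) h₁, hmod⟩⟩
  simp only [Set.mem_union, Set.mem_iUnion] at h₀ h₁ hR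
  rcases hR with ⟨i, hi⟩ | ⟨j, hj⟩
  · rcases h₁ with ⟨j, hj⟩ | hS
    · exact both hi hj
    · exact Set.mem_iUnion.mpr
        ⟨i + 1, Or.inl (Or.inl (Or.inr ⟨hlt, p₀, p₁, r₀, r₁, hbr, hi, hS, hmod⟩))⟩
  · rcases h₀ with ⟨i, hi⟩ | hS
    · exact both hi hj
    · exact Set.mem_iUnion.mpr
        ⟨j + 1, Or.inl (Or.inr ⟨hlt, p₀, p₁, r₀, r₁, hbr, hS, hj, hmod⟩)⟩

theorem mem_iUnion_rseq_of_stepAt_nil (hd : 0 < d) {T : BTree Q} (hroot : B.StepAt T [])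
    {b : Bool} (hb : [b] ∈ T.dom) (hbR : (T.state [b], T.counter [b] % d) ∈ ⋃ i, B.Rseq nN d i)
    (hsib : ∀ c, [c] ∈ T.dom →
      (T.state [c], T.counter [c] % d) ∈ (⋃ i, B.Rseq nN d i) ∪ resid d (B.Sset nN)) :
    (T.state [], T.counter [] % d) ∈ ⋃ i, B.Rseq nN d i := by
  rcases hroot with ⟨h0, h1, hbr, hsum⟩ | ⟨h0, h1, z, hun, hz⟩
  · rw [hsum, Nat.add_mod]
    refine mem_iUnion_rseq_of_br hd hbr (hsib false h0) (hsib true h1) ?_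
    cases b
    exacts [Or.inl hbR, Or.inr hbR]
  · obtain rfl : b = false := by cases b; rfl; exact absurd hb h1
    refine deltaUn_iUnion_rseq_subset ⟨Nat.mod_lt _ hd, z, _, _, hun, hbR, ?_⟩
    calc ((T.counter [] % d : ℕ) : ℤ) ≡ T.counter [] [ZMOD d] :=
          Int.natCast_modEq_iff.mpr (Nat.mod_modEq _ d)
      _ = T.counter [false] - z := by simp only [List.nil_append] at hz; omega
      _ ≡ ((T.counter [false] % d : ℕ) : ℤ) - z [ZMOD d] :=
          (Int.natCast_modEq_iff.mpr (Nat.mod_modEq _ d)).symm.sub_right z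

theorem mem_iUnion_rseq_of_isRT (hd : 0 < d) {T : BTree Q} (hT : B.IsRT T)
    (hbig : ∃ u ∈ T.dom, nN < T.counter u) :
    (T.state [], T.counter [] % d) ∈ ⋃ i, B.Rseq nN d i := by
  induction hsize : T.dom.ncard using Nat.strong_induction_on generalizing T with
  | _ n ih =>
  have ih_child (c : Bool) (hc : [c] ∈ T.dom)
      (h : ∃ y ∈ (T.subtree [c] hc).dom, nN < (T.subtree [c] hc).counter y) :
      (T.state [c], T.counter [c] % d) ∈ ⋃ i, B.Rseq nN d i :=
    ih _ (hsize ▸ T.ncard_subtree_lt [c] hc (List.cons_ne_nil c [])) (isRT_subtree hT [c] hc) h rfl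
  by_cases hchild : ∃ b x, b :: x ∈ T.dom ∧ nN < T.counter (b :: x)
  · obtain ⟨b, x, hbx, hbx_big⟩ := hchild
    have hb : [b] ∈ T.dom := T.prefixClosed hbx ⟨x, rfl⟩
    refine mem_iUnion_rseq_of_stepAt_nil hd (hT.1 [] T.root_mem fun h => h.2 b hb) hb
      (ih_child b hb ⟨x, hbx, hbx_big⟩) fun c hc => ?_
    by_cases hbdd : (T.subtree [c] hc).Bounded nN
    · exact Or.inr ⟨_, ⟨_, isRT_subtree hT [c] hc, hbdd, rfl⟩, rfl⟩
    · simp only [BTree.Bounded, not_forall, not_le, exists_prop] at hbdd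
      exact Or.inl (ih_child c hc hbdd)
  · push Not at hchild
    have hroot : nN < T.counter [] := by
      obtain ⟨u, hu, hu_big⟩ := hbig
      cases u with
      | nil => exact hu_big
      | cons b x => exact absurd (hchild b x hu) (not_le.mpr hu_big)
    refine Set.mem_iUnion.mpr ⟨0, Nat.mod_lt _ hd, _, rfl, hroot.le, T, hT, fun u hu hne => ?_, rfl⟩
    obtain ⟨b, x, rfl⟩ := List.exists_cons_of_ne_nil hne
    exact hchild b x hu

end BVASS1

/-- Correctness of the residue reachability construction:
`X = R ∪ (S ∩ Q×[n₀, n₀+N])/ℤ_d` equals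
`{ (q, n mod d) : n ∈ reach(q), n ≥ n₀ }`, where `N = |Q| · d`. -/
theorem stmt13 {Q : Type} [Fintype Q] (B : BVASS1 Q) (n₀ d : ℕ) (hd : 1 ≤ d) :
    (⋃ i, B.Rseq (n₀ + Fintype.card Q * d) d i) ∪
        BVASS1.resid d
          {x ∈ B.Sset (n₀ + Fintype.card Q * d) |
            n₀ ≤ x.2 ∧ x.2 ≤ n₀ + Fintype.card Q * d}
      = {x : Q × ℕ | x.2 < d ∧ ∃ n, B.Reachable x.1 n ∧ n₀ ≤ n ∧ x.2 = n % d} := by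
  set N := Fintype.card Q * d
  apply Set.Subset.antisymm
  · refine Set.union_subset (Set.iUnion_subset fun i => ?_) ?_
    · calc B.Rseq (n₀ + N) d i ⊆ B.Rseq (n₀ + N) d N := BVASS1.rseq_subset_rseq_card i
        _ ⊆ B.reachResidues d (n₀ + N - N) := BVASS1.rseq_subset_reachResidues hd N (by omega)
        _ = B.reachResidues d n₀ := by rw [Nat.add_sub_cancel]
    · exact BVASS1.resid_subset_reachResidues hd fun x ⟨⟨T, hT, _, hlab⟩, hx, _⟩ =>
        ⟨⟨T, hT, hlab⟩, hx⟩
  · rintro ⟨q, _⟩ ⟨-, n, ⟨T, hT, hlab⟩, hn, rfl⟩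
    by_cases hbdd : T.Bounded (n₀ + N)
    · have hle : n ≤ n₀ + N := by simpa [BTree.counter, hlab] using hbdd [] T.root_mem
      exact Or.inr ⟨n, ⟨⟨T, hT, hbdd, hlab⟩, hn, hle⟩, rfl⟩
    · simp only [BTree.Bounded, not_forall, not_le, exists_prop] at hbdd
      have hR := BVASS1.mem_iUnion_rseq_of_isRT hd hT hbdd
      simp only [BTree.state, BTree.counter, hlab] at hR
      exact Or.inl hR
end

section
/- In the residue fixed-point construction, for every i ∈ [0, N] and every (q, r) ∈ R_i there exists n ∈ reach(q) with n ≥ n₀ + N − i and n ≡ r (mod d). -/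
section Aux

namespace BTree

variable {Q : Type}

/-- Graft a tree under a new root with one child. -/
def graft1 (T : BTree Q) (l : Q × ℕ) : BTree Q where
  dom := insert [] ((false :: ·) '' T.dom)
  label
    | [] => l
    | _ :: x => T.label x
  finite := (T.finite.image _).insert _
  root_mem := Set.mem_insert _ _
  prefixClosed := by
    rintro u v hv hp
    rcases u with _ | ⟨b, x⟩
    · exact Set.mem_insert _ _
    · rcases hv with hv | ⟨y, hy, rfl⟩
      · subst hv; rcases hp with ⟨t, ht⟩; simp at ht
      · obtain ⟨rfl, hxy⟩ := List.cons_prefix_cons.mp hp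
        exact Set.mem_insert_of_mem _ ⟨x, T.prefixClosed hy hxy, rfl⟩

lemma mem_graft1 {T : BTree Q} {l : Q × ℕ} {b : Bool} {x : List Bool} :
    b :: x ∈ (T.graft1 l).dom ↔ b = false ∧ x ∈ T.dom := by
  simp only [graft1, Set.mem_insert_iff, Set.mem_image]
  constructor
  · rintro (h | ⟨y, hy, h⟩)
    · simp at h
    · obtain ⟨rfl, rfl⟩ : false = b ∧ y = x := by simpa using h
      exact ⟨rfl, hy⟩
  · rintro ⟨rfl, hx⟩
    exact Or.inr ⟨x, hx, rfl⟩

lemma graft1_isLeaf {T : BTree Q} {l : Q × ℕ} {x : List Bool} (hx : x ∈ T.dom) :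
    (T.graft1 l).IsLeaf (false :: x) ↔ T.IsLeaf x := by
  constructor
  · rintro ⟨-, h⟩
    exact ⟨hx, fun b hb => h b (by rw [List.cons_append]; exact mem_graft1.mpr ⟨rfl, hb⟩)⟩
  · rintro ⟨-, h⟩
    refine ⟨mem_graft1.mpr ⟨rfl, hx⟩, fun b hb => ?_⟩
    rw [List.cons_append] at hb
    exact h b (mem_graft1.mp hb).2

lemma graft1_not_isLeaf_root {T : BTree Q} {l : Q × ℕ} :
    ¬ (T.graft1 l).IsLeaf [] := by
  rintro ⟨-, h⟩
  exact h false (mem_graft1.mpr ⟨rfl, T.root_mem⟩)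

/-- Graft two trees under a new root. -/
def graft2 (T₀ T₁ : BTree Q) (l : Q × ℕ) : BTree Q where
  dom := insert [] ((false :: ·) '' T₀.dom ∪ (true :: ·) '' T₁.dom)
  label
    | [] => l
    | false :: x => T₀.label x
    | true :: x => T₁.label x
  finite := ((T₀.finite.image _).union (T₁.finite.image _)).insert _
  root_mem := Set.mem_insert _ _
  prefixClosed := by
    rintro u v hv hp
    rcases u with _ | ⟨b, x⟩
    · exact Set.mem_insert _ _
    · rcases hv with hv | (⟨y, hy, rfl⟩ | ⟨y, hy, rfl⟩)
      · subst hv; rcases hp with ⟨t, ht⟩; simp at ht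
      · obtain ⟨rfl, hxy⟩ := List.cons_prefix_cons.mp hp
        exact Set.mem_insert_of_mem _ (Or.inl ⟨x, T₀.prefixClosed hy hxy, rfl⟩)
      · obtain ⟨rfl, hxy⟩ := List.cons_prefix_cons.mp hp
        exact Set.mem_insert_of_mem _ (Or.inr ⟨x, T₁.prefixClosed hy hxy, rfl⟩)

lemma mem_graft2 {T₀ T₁ : BTree Q} {l : Q × ℕ} {b : Bool} {x : List Bool} :
    b :: x ∈ (T₀.graft2 T₁ l).dom ↔
      (b = false ∧ x ∈ T₀.dom) ∨ (b = true ∧ x ∈ T₁.dom) := by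
  simp only [graft2, Set.mem_insert_iff, Set.mem_union, Set.mem_image]
  constructor
  · rintro (h | (⟨y, hy, h⟩ | ⟨y, hy, h⟩))
    · simp at h
    · obtain ⟨rfl, rfl⟩ : false = b ∧ y = x := by simpa using h
      exact Or.inl ⟨rfl, hy⟩
    · obtain ⟨rfl, rfl⟩ : true = b ∧ y = x := by simpa using h
      exact Or.inr ⟨rfl, hy⟩
  · rintro (⟨rfl, hx⟩ | ⟨rfl, hx⟩)
    · exact Or.inr (Or.inl ⟨x, hx, rfl⟩)
    · exact Or.inr (Or.inr ⟨x, hx, rfl⟩)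

lemma graft2_isLeaf_false {T₀ T₁ : BTree Q} {l : Q × ℕ} {x : List Bool} (hx : x ∈ T₀.dom) :
    (T₀.graft2 T₁ l).IsLeaf (false :: x) ↔ T₀.IsLeaf x := by
  constructor
  · rintro ⟨-, h⟩
    exact ⟨hx, fun b hb =>
      h b (by rw [List.cons_append]; exact mem_graft2.mpr (Or.inl ⟨rfl, hb⟩))⟩
  · rintro ⟨-, h⟩
    refine ⟨mem_graft2.mpr (Or.inl ⟨rfl, hx⟩), fun b hb => ?_⟩
    rw [List.cons_append] at hb
    rcases mem_graft2.mp hb with ⟨-, hb⟩ | ⟨hb, -⟩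
    · exact h b hb
    · simp at hb

lemma graft2_isLeaf_true {T₀ T₁ : BTree Q} {l : Q × ℕ} {x : List Bool} (hx : x ∈ T₁.dom) :
    (T₀.graft2 T₁ l).IsLeaf (true :: x) ↔ T₁.IsLeaf x := by
  constructor
  · rintro ⟨-, h⟩
    exact ⟨hx, fun b hb =>
      h b (by rw [List.cons_append]; exact mem_graft2.mpr (Or.inr ⟨rfl, hb⟩))⟩
  · rintro ⟨-, h⟩
    refine ⟨mem_graft2.mpr (Or.inr ⟨rfl, hx⟩), fun b hb => ?_⟩
    rw [List.cons_append] at hb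
    rcases mem_graft2.mp hb with ⟨hb, -⟩ | ⟨-, hb⟩
    · simp at hb
    · exact h b hb

lemma graft2_not_isLeaf_root {T₀ T₁ : BTree Q} {l : Q × ℕ} :
    ¬ (T₀.graft2 T₁ l).IsLeaf [] := by
  rintro ⟨-, h⟩
  exact h false (mem_graft2.mpr (Or.inl ⟨rfl, T₀.root_mem⟩))

end BTree

namespace BVASS1

variable {Q : Type}

lemma isRT_graft1 {B : BVASS1 Q} {T : BTree Q} (hT : B.IsRT T) {q : Q} {z : ℤ} {m : ℕ}
    (hun : B.un q z (T.state [])) (hc : (T.counter [] : ℤ) = (m : ℤ) + z) :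
    B.IsRT (T.graft1 (q, m)) := by
  constructor
  · intro u hu hleaf
    rcases u with _ | ⟨b, x⟩
    · right
      refine ⟨BTree.mem_graft1.mpr ⟨rfl, T.root_mem⟩,
        fun h => by simpa using (BTree.mem_graft1.mp h).1, z, ?_, ?_⟩
      · exact hun
      · exact hc
    · obtain ⟨rfl, hx⟩ := BTree.mem_graft1.mp hu
      have hxleaf : ¬ T.IsLeaf x := fun h => hleaf ((BTree.graft1_isLeaf hx).mpr h)
      rcases hT.1 x hx hxleaf with ⟨h0, h1, hbr, hcnt⟩ | ⟨h0, h1, z', hz', hcnt⟩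
      · left
        refine ⟨?_, ?_, hbr, hcnt⟩
        · rw [List.cons_append]; exact BTree.mem_graft1.mpr ⟨rfl, h0⟩
        · rw [List.cons_append]; exact BTree.mem_graft1.mpr ⟨rfl, h1⟩
      · right
        refine ⟨?_, ?_, z', hz', hcnt⟩
        · rw [List.cons_append]; exact BTree.mem_graft1.mpr ⟨rfl, h0⟩
        · rw [List.cons_append]; intro h; exact h1 (BTree.mem_graft1.mp h).2
  · intro u hleaf
    rcases u with _ | ⟨b, x⟩
    · exact absurd hleaf BTree.graft1_not_isLeaf_root
    · obtain ⟨rfl, hx⟩ := BTree.mem_graft1.mp hleaf.1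
      exact hT.2 x ((BTree.graft1_isLeaf hx).mp hleaf)

lemma isRT_graft2 {B : BVASS1 Q} {T₀ T₁ : BTree Q} (hT₀ : B.IsRT T₀) (hT₁ : B.IsRT T₁)
    {q : Q} (hbr : B.br q (T₀.state []) (T₁.state [])) :
    B.IsRT (T₀.graft2 T₁ (q, T₀.counter [] + T₁.counter [])) := by
  constructor
  · intro u hu hleaf
    rcases u with _ | ⟨b, x⟩
    · left
      refine ⟨BTree.mem_graft2.mpr (Or.inl ⟨rfl, T₀.root_mem⟩),
        BTree.mem_graft2.mpr (Or.inr ⟨rfl, T₁.root_mem⟩), hbr, rfl⟩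
    · cases b
      · obtain ⟨-, hx⟩ | ⟨h, -⟩ := BTree.mem_graft2.mp hu
        swap
        · simp at h
        have hxleaf : ¬ T₀.IsLeaf x := fun h => hleaf ((BTree.graft2_isLeaf_false hx).mpr h)
        rcases hT₀.1 x hx hxleaf with ⟨h0, h1, hbr', hcnt⟩ | ⟨h0, h1, z', hz', hcnt⟩
        · left
          refine ⟨?_, ?_, hbr', hcnt⟩
          · rw [List.cons_append]; exact BTree.mem_graft2.mpr (Or.inl ⟨rfl, h0⟩)
          · rw [List.cons_append]; exact BTree.mem_graft2.mpr (Or.inl ⟨rfl, h1⟩)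
        · right
          refine ⟨?_, ?_, z', hz', hcnt⟩
          · rw [List.cons_append]; exact BTree.mem_graft2.mpr (Or.inl ⟨rfl, h0⟩)
          · rw [List.cons_append]; intro h
            rcases BTree.mem_graft2.mp h with ⟨-, h⟩ | ⟨h, -⟩
            · exact h1 h
            · simp at h
      · obtain ⟨h, -⟩ | ⟨-, hx⟩ := BTree.mem_graft2.mp hu
        · simp at h
        have hxleaf : ¬ T₁.IsLeaf x := fun h => hleaf ((BTree.graft2_isLeaf_true hx).mpr h)
        rcases hT₁.1 x hx hxleaf with ⟨h0, h1, hbr', hcnt⟩ | ⟨h0, h1, z', hz', hcnt⟩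
        · left
          refine ⟨?_, ?_, hbr', hcnt⟩
          · rw [List.cons_append]; exact BTree.mem_graft2.mpr (Or.inr ⟨rfl, h0⟩)
          · rw [List.cons_append]; exact BTree.mem_graft2.mpr (Or.inr ⟨rfl, h1⟩)
        · right
          refine ⟨?_, ?_, z', hz', hcnt⟩
          · rw [List.cons_append]; exact BTree.mem_graft2.mpr (Or.inr ⟨rfl, h0⟩)
          · rw [List.cons_append]; intro h
            rcases BTree.mem_graft2.mp h with ⟨h, -⟩ | ⟨-, h⟩
            · simp at h
            · exact h1 h
  · intro u hleaf
    rcases u with _ | ⟨b, x⟩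
    · exact absurd hleaf BTree.graft2_not_isLeaf_root
    · cases b
      · obtain ⟨-, hx⟩ | ⟨h, -⟩ := BTree.mem_graft2.mp hleaf.1
        swap
        · simp at h
        exact hT₀.2 x ((BTree.graft2_isLeaf_false hx).mp hleaf)
      · obtain ⟨h, -⟩ | ⟨-, hx⟩ := BTree.mem_graft2.mp hleaf.1
        · simp at h
        exact hT₁.2 x ((BTree.graft2_isLeaf_true hx).mp hleaf)

lemma Reachable.graftUn {B : BVASS1 Q} {p q : Q} {z : ℤ} {n m : ℕ}
    (hun : B.un q z p) (h : B.Reachable p n) (hm : (n : ℤ) = (m : ℤ) + z) :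
    B.Reachable q m := by
  obtain ⟨T, hT, hl⟩ := h
  have hs : T.state [] = p := by rw [BTree.state, hl]
  have hc : T.counter [] = n := by rw [BTree.counter, hl]
  exact ⟨T.graft1 (q, m), isRT_graft1 hT (hs ▸ hun) (by rw [hc]; exact hm), rfl⟩

lemma Reachable.graftBr {B : BVASS1 Q} {q p₀ p₁ : Q} {n₀ n₁ : ℕ}
    (hbr : B.br q p₀ p₁) (h₀ : B.Reachable p₀ n₀) (h₁ : B.Reachable p₁ n₁) :
    B.Reachable q (n₀ + n₁) := by
  obtain ⟨T₀, hT₀, hl₀⟩ := h₀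
  obtain ⟨T₁, hT₁, hl₁⟩ := h₁
  have hs₀ : T₀.state [] = p₀ := by rw [BTree.state, hl₀]
  have hs₁ : T₁.state [] = p₁ := by rw [BTree.state, hl₁]
  have hc₀ : T₀.counter [] = n₀ := by rw [BTree.counter, hl₀]
  have hc₁ : T₁.counter [] = n₁ := by rw [BTree.counter, hl₁]
  refine ⟨T₀.graft2 T₁ (q, T₀.counter [] + T₁.counter []),
    isRT_graft2 hT₀ hT₁ (by rw [hs₀, hs₁]; exact hbr), ?_⟩
  show (q, T₀.counter [] + T₁.counter []) = (q, n₀ + n₁)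
  rw [hc₀, hc₁]

end BVASS1

lemma aux_mod_eq_of_zmod {m r d : ℕ} (hd : 1 ≤ d) (hrd : r < d)
    (h : (m : ℤ) ≡ (r : ℤ) [ZMOD (d : ℤ)]) : m % d = r := by
  have h2 : (m : ℤ) % d = (r : ℤ) % d := h
  have h3 : (r : ℤ) % (d : ℤ) = r :=
    Int.emod_eq_of_lt (by positivity) (by exact_mod_cast hrd)
  have h4 : ((m % d : ℕ) : ℤ) = (m : ℤ) % d := by push_cast; ring
  have : ((m % d : ℕ) : ℤ) = (r : ℤ) := by rw [h4, h2, h3]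
  exact_mod_cast this

lemma aux_zmod_of_mod {n r d : ℕ} (h : n % d = r) : (n : ℤ) ≡ (r : ℤ) [ZMOD (d : ℤ)] := by
  subst h
  have h1 : ((n % d : ℕ) : ℤ) = (n : ℤ) % d := by push_cast; ring
  show (n : ℤ) % d = ((n % d : ℕ) : ℤ) % d
  rw [h1, Int.emod_emod_of_dvd _ dvd_rfl]

end Aux

/-- For every `i ≤ N` and `(q, r) ∈ R_i` there is `n ∈ reach(q)` with
`n ≥ n₀ + N − i` and `n ≡ r (mod d)`, where `N = |Q| · d`. -/
theorem stmt14 {Q : Type} [Fintype Q] (B : BVASS1 Q) (n₀ d : ℕ) (hd : 1 ≤ d)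
    (i : ℕ) (hi : i ≤ Fintype.card Q * d) (q : Q) (r : ℕ)
    (hr : (q, r) ∈ B.Rseq (n₀ + Fintype.card Q * d) d i) :
    ∃ n, B.Reachable q n ∧ n₀ + Fintype.card Q * d - i ≤ n ∧ n % d = r := by
  obtain ⟨N, hN⟩ : ∃ N, N = Fintype.card Q * d := ⟨_, rfl⟩
  rw [← hN] at hi hr ⊢
  induction i generalizing q r with
  | zero =>
    obtain ⟨hrd, n, hrn, hn, T, hRT, -, hl⟩ := hr
    exact ⟨n, ⟨T, hRT, hl⟩, by omega, hrn.symm⟩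
  | succ i IH =>
    have hi' : i ≤ N := Nat.le_of_succ_le hi
    rcases hr with (((hr | hr) | hr) | hr) | hr
    · obtain ⟨n, hre, hb, hm⟩ := IH q r hr hi'
      exact ⟨n, hre, by omega, hm⟩
    · obtain ⟨hrd, z, p, r', hun, hmem, hmod⟩ := hr
      obtain ⟨n, hre, hb, hm⟩ := IH p r' hmem hi'
      have hz := B.un_small _ _ _ hun
      have hnz : (n : ℤ) ≡ (r' : ℤ) [ZMOD (d : ℤ)] := aux_zmod_of_mod hm
      obtain ⟨m, hmz, hmb⟩ : ∃ m : ℕ, (n : ℤ) = (m : ℤ) + z ∧ n₀ + N - (i + 1) ≤ m := by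
        rcases hz with rfl | rfl | rfl
        · exact ⟨n + 1, by push_cast; ring, by omega⟩
        · exact ⟨n, by push_cast; ring, by omega⟩
        · have h1 : 1 ≤ n := by omega
          exact ⟨n - 1, by push_cast [h1]; ring, by omega⟩
      refine ⟨m, hre.graftUn hun hmz, hmb, aux_mod_eq_of_zmod hd hrd ?_⟩
      have h2 : (m : ℤ) = (n : ℤ) - z := by linarith
      have h3 : (m : ℤ) ≡ (r' : ℤ) - z [ZMOD (d : ℤ)] := by
        rw [h2]; exact hnz.sub_right z
      exact h3.trans hmod.symm
    · obtain ⟨hrd, p₀, p₁, r₀, r₁, hbr, h₀, h₁, hmod⟩ := hr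
      obtain ⟨n', hre, hb, hm0⟩ := IH p₀ r₀ h₀ hi'
      obtain ⟨m, hS, hm1⟩ := h₁
      obtain ⟨T, hRT, -, hl⟩ := hS
      have hre1 : B.Reachable p₁ m := ⟨T, hRT, hl⟩
      have hmod' : r % d = (r₀ + r₁) % d := hmod
      refine ⟨n' + m, BVASS1.Reachable.graftBr hbr hre hre1, by omega, ?_⟩
      rw [Nat.add_mod, hm0, ← hm1, ← hmod']
      exact Nat.mod_eq_of_lt hrd
    · obtain ⟨hrd, p₀, p₁, r₀, r₁, hbr, h₀, h₁, hmod⟩ := hr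
      obtain ⟨n', hre, hb, hm1⟩ := IH p₁ r₁ h₁ hi'
      obtain ⟨m, hS, hm0⟩ := h₀
      obtain ⟨T, hRT, -, hl⟩ := hS
      have hre0 : B.Reachable p₀ m := ⟨T, hRT, hl⟩
      have hmod' : r % d = (r₀ + r₁) % d := hmod
      refine ⟨m + n', BVASS1.Reachable.graftBr hbr hre0 hre, by omega, ?_⟩
      rw [Nat.add_mod, hm1, ← hm0, ← hmod']
      exact Nat.mod_eq_of_lt hrd
    · obtain ⟨hrd, p₀, p₁, r₀, r₁, hbr, h₀, h₁, hmod⟩ := hr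
      obtain ⟨n', hre0, hb0, hm0⟩ := IH p₀ r₀ h₀ hi'
      obtain ⟨m', hre1, hb1, hm1⟩ := IH p₁ r₁ h₁ hi'
      have hmod' : r % d = (r₀ + r₁) % d := hmod
      refine ⟨n' + m', BVASS1.Reachable.graftBr hbr hre0 hre1, by omega, ?_⟩
      rw [Nat.add_mod, hm0, hm1, ← hmod']
      exact Nat.mod_eq_of_lt hrd
end
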